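/- arXiv:1409.4116 — 9 statements merged into one kernel-verified Lean document; each statement's English description precedes it below -/
import Mathlib

section
/- Let G be a finite connected simple graph and M a minimum dominating set of G. Then there exists a spanning tree T of G such that M is a minimum dominating set of T; in particular γ(T) = γ(G). -/
open SimpleGraph Finset

/-- `S` is a dominating set of `G`: every vertex is in `S` or adjacent to a vertex of `S`. -/
def DomSet {V : Type*} (G : SimpleGraph V) (S : Finset V) : Prop :=
  ∀ v : V, v ∈ S ∨ ∃ u ∈ S, G.Adj u v

/-- The domination number of `G`. -/
noncomputable def domNum {V : Type*} (G : SimpleGraph V) : ℕ :=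
  sInf {n | ∃ S : Finset V, DomSet G S ∧ S.card = n}

/-- A walk from an isolated vertex goes nowhere. -/
lemma reach_isolated {V : Type*} {H : SimpleGraph V} {v w : V}
    (hiso : ∀ x, ¬ H.Adj v x) (h : H.Reachable v w) : v = w := by
  obtain ⟨p⟩ := h
  cases p with
  | nil => rfl
  | cons ha _ => exact absurd ha (hiso _)

/-- Adding an edge between two non-reachable vertices keeps a graph acyclic. -/
lemma acyclic_sup_edge {V : Type*} {H : SimpleGraph V} (hH : H.IsAcyclic) {a b : V}
    (hab : a ≠ b) (hr : ¬ H.Reachable a b) :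
    (H ⊔ SimpleGraph.fromEdgeSet {s(a, b)}).IsAcyclic := by
  intro x p hp
  by_cases he : s(a, b) ∈ p.edges
  · have hkey := (adj_and_reachable_delete_edges_iff_exists_cycle
      (G := H ⊔ SimpleGraph.fromEdgeSet {s(a, b)}) (v := a) (w := b)).mpr ⟨x, p, hp, he⟩
    have hmono : ((H ⊔ SimpleGraph.fromEdgeSet {s(a, b)}) \
        SimpleGraph.fromEdgeSet {s(a, b)}) ≤ H := by
      intro u v huv
      rw [sdiff_adj, sup_adj] at huv
      rcases huv.1 with h1 | h1
      · exact h1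
      · exact absurd h1 huv.2
    exact hr (hkey.2.mono hmono)
  · have hsub : ∀ e ∈ p.edges, e ∈ H.edgeSet := by
      intro e hep
      have h1 := p.edges_subset_edgeSet hep
      rw [edgeSet_sup, Set.mem_union, edgeSet_fromEdgeSet] at h1
      rcases h1 with h1 | h1
      · exact h1
      · rcases h1 with ⟨h2, -⟩
        rw [Set.mem_singleton_iff] at h2
        exact absurd (h2 ▸ hep) he
    exact hH (p.transfer H hsub) (hp.transfer hsub)

/-- Along any `G`-walk between `H`-non-reachable vertices there is a crossing edge. -/
lemma exists_crossing {V : Type*} {G H : SimpleGraph V} :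
    ∀ {x y : V}, G.Walk x y → ¬ H.Reachable x y →
      ∃ a b, G.Adj a b ∧ ¬ H.Reachable a b := by
  intro x y w
  induction w with
  | nil => exact fun h => absurd (Reachable.refl _) h
  | @cons u z y hadj p ih =>
    intro h
    by_cases hr : H.Reachable u z
    · exact ih (fun hr2 => h (hr.trans hr2))
    · exact ⟨u, z, hadj, hr⟩

/-- Any acyclic subgraph of a connected graph extends to a spanning tree. -/
lemma exists_tree_ext {V : Type*} [Fintype V] (G : SimpleGraph V) (hG : G.Connected) :
    ∀ (H : SimpleGraph V), H ≤ G → H.IsAcyclic → ∃ T, H ≤ T ∧ T ≤ G ∧ T.IsTree := by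
  classical
  have key : ∀ n (H : SimpleGraph V), (G.edgeSet \ H.edgeSet).ncard = n → H ≤ G →
      H.IsAcyclic → ∃ T, H ≤ T ∧ T ≤ G ∧ T.IsTree := by
    intro n
    induction n using Nat.strong_induction_on with
    | _ n ih =>
      intro H hcard hle hac
      by_cases hconn : H.Connected
      · exact ⟨H, le_refl H, hle, ⟨hconn, hac⟩⟩
      · have hne : Nonempty V := hG.nonempty
        have hpre : ¬ H.Preconnected := by
          intro hp; exact hconn ⟨hp⟩
        rw [SimpleGraph.Preconnected] at hpre
        push_neg at hpre
        obtain ⟨x, y, hxy⟩ := hpre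
        obtain ⟨wxy⟩ := hG.preconnected x y
        obtain ⟨a, b, hab, hnr⟩ := exists_crossing wxy hxy
        have hne' : a ≠ b := hab.ne
        have hnadj : ¬ H.Adj a b := fun h => hnr h.reachable
        set H' := H ⊔ SimpleGraph.fromEdgeSet {s(a, b)} with hH'
        have hH'le : H' ≤ G := by
          apply sup_le hle
          intro u v huv
          rw [fromEdgeSet_adj, Set.mem_singleton_iff] at huv
          rcases Sym2.eq_iff.mp huv.1 with ⟨rfl, rfl⟩ | ⟨rfl, rfl⟩
          · exact hab
          · exact hab.symm
        have hH'ac : H'.IsAcyclic := acyclic_sup_edge hac hne' hnr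
        have hHle' : H ≤ H' := le_sup_left
        have hesub : G.edgeSet \ H'.edgeSet ⊂ G.edgeSet \ H.edgeSet := by
          constructor
          · intro e he
            exact ⟨he.1, fun hH => he.2 ((edgeSet_mono hHle') hH)⟩
          · intro hsub
            have h1 : s(a, b) ∈ G.edgeSet \ H.edgeSet := ⟨hab, hnadj⟩
            have h2 := hsub h1
            apply h2.2
            rw [hH', edgeSet_sup, Set.mem_union]
            right
            rw [edgeSet_fromEdgeSet]
            exact ⟨rfl, by simpa using hne'⟩
        have hfin : (G.edgeSet \ H.edgeSet).Finite := Set.Finite.diff (Set.toFinite _)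
        have hlt : (G.edgeSet \ H'.edgeSet).ncard < n :=
          hcard ▸ Set.ncard_lt_ncard hesub hfin
        obtain ⟨T, hT1, hT2, hT3⟩ := ih _ hlt H' rfl hH'le hH'ac
        exact ⟨T, le_trans hHle' hT1, hT2, hT3⟩
  exact fun H hle hac => key _ H rfl hle hac

theorem exists_spanningTree_preserving_minDomSet {V : Type*} [Fintype V]
    (G : SimpleGraph V) (hG : G.Connected) (M : Finset V)
    (hM : DomSet G M) (hmin : M.card = domNum G) :
    ∃ T : SimpleGraph V, T ≤ G ∧ T.IsTree ∧ DomSet T M ∧ M.card = domNum T ∧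
      domNum T = domNum G := by
  classical
  have hdom : ∀ v, v ∉ M → ∃ u, u ∈ M ∧ G.Adj u v := by
    intro v hv
    rcases hM v with h | ⟨u, hu, hadj⟩
    · exact absurd h hv
    · exact ⟨u, hu, hadj⟩
  choose f hfM hfadj using hdom
  -- build the star forest over a finset of vertices
  have build : ∀ s : Finset V, ∃ H : SimpleGraph V, H ≤ G ∧ H.IsAcyclic ∧
      (∀ x y, H.Adj x y → ∃ w, ∃ h : w ∉ M, w ∈ s ∧ s(x, y) = s(w, f w h)) ∧
      (∀ v (h : v ∉ M), v ∈ s → H.Adj (f v h) v) := by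
    intro s
    induction s using Finset.induction_on with
    | empty =>
      refine ⟨⊥, bot_le, ?_, ?_, ?_⟩
      · intro x p hp
        cases p with
        | nil => exact hp.not_of_nil
        | cons ha _ => exact ha
      · intro x y h; exact absurd h (by simp)
      · intro v h hv; simp at hv
    | @insert v s' hvs ih =>
      obtain ⟨H, hle, hac, hchar, hdomi⟩ := ih
      by_cases hvM : v ∈ M
      · refine ⟨H, hle, hac, ?_, ?_⟩
        · intro x y hxy
          obtain ⟨w, h, hw, he⟩ := hchar x y hxy
          exact ⟨w, h, Finset.mem_insert_of_mem hw, he⟩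
        · intro u h hu
          rcases Finset.mem_insert.mp hu with rfl | hu'
          · exact absurd hvM h
          · exact hdomi u h hu'
      · -- v ∉ M : add edge s(f v hvM, v)
        have hfvM : f v hvM ∈ M := hfM v hvM
        have hvne : f v hvM ≠ v := fun h => hvM (h ▸ hfvM)
        have hviso : ∀ x, ¬ H.Adj v x := by
          intro x hx
          obtain ⟨w, h, hw, he⟩ := hchar v x hx
          rcases Sym2.eq_iff.mp he with ⟨h1, h2⟩ | ⟨h1, h2⟩
          · exact hvs (h1 ▸ hw)
          · exact hvM (by rw [h1]; exact hfM w h)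
        have hnr : ¬ H.Reachable (f v hvM) v := by
          intro h
          exact hvne (reach_isolated hviso h.symm).symm
        refine ⟨H ⊔ SimpleGraph.fromEdgeSet {s(f v hvM, v)}, ?_, ?_, ?_, ?_⟩
        · apply sup_le hle
          intro x y hxy
          rw [fromEdgeSet_adj, Set.mem_singleton_iff] at hxy
          rcases Sym2.eq_iff.mp hxy.1 with ⟨h1, h2⟩ | ⟨h1, h2⟩
          · rw [h1, h2]; exact hfadj v hvM
          · rw [h1, h2]; exact (hfadj v hvM).symm
        · exact acyclic_sup_edge hac hvne hnr
        · intro x y hxy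
          rcases (sup_adj _ _ _ _).mp hxy with h | h
          · obtain ⟨w, hw1, hw2, he⟩ := hchar x y h
            exact ⟨w, hw1, Finset.mem_insert_of_mem hw2, he⟩
          · rw [fromEdgeSet_adj, Set.mem_singleton_iff] at h
            refine ⟨v, hvM, Finset.mem_insert_self _ _, ?_⟩
            rw [h.1, Sym2.eq_swap]
        · intro u h hu
          rcases Finset.mem_insert.mp hu with rfl | hu'
          · right
            rw [fromEdgeSet_adj]
            exact ⟨rfl, hvne⟩
          · exact (sup_adj _ _ _ _).mpr (Or.inl (hdomi u h hu'))
  obtain ⟨F, hFle, hFac, _, hFdom⟩ := build Finset.univ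
  obtain ⟨T, hFT, hTG, hTtree⟩ := exists_tree_ext G hG F hFle hFac
  have hTdom : DomSet T M := by
    intro v
    by_cases hv : v ∈ M
    · exact Or.inl hv
    · exact Or.inr ⟨f v hv, hfM v hv, hFT (hFdom v hv (Finset.mem_univ v))⟩
  -- domination numbers
  have hTG_dom : ∀ S : Finset V, DomSet T S → DomSet G S := by
    intro S hS v
    rcases hS v with h | ⟨u, hu, hadj⟩
    · exact Or.inl h
    · exact Or.inr ⟨u, hu, hTG hadj⟩
  have hT_le : domNum T ≤ M.card := Nat.sInf_le ⟨M, hTdom, rfl⟩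
  have hG_le : domNum G ≤ domNum T := by
    have hne : {n | ∃ S : Finset V, DomSet T S ∧ S.card = n}.Nonempty :=
      ⟨M.card, M, hTdom, rfl⟩
    obtain ⟨S, hS, hScard⟩ := Nat.sInf_mem hne
    exact Nat.sInf_le ⟨S, hTG_dom S hS, hScard⟩
  have heq : domNum T = domNum G :=
    le_antisymm (le_trans hT_le (le_of_eq hmin)) hG_le
  exact ⟨T, hTG, hTtree, hTdom, by rw [hmin, heq], heq⟩
end

section
/- For any finite connected simple graph G there exists a spanning tree T of G with γ(T) = γ(G). -/
open SimpleGraph Finset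

/-- Deleting an edge whose endpoints remain reachable preserves connectivity. -/
lemma connected_deleteEdge_aux {V : Type*} {G : SimpleGraph V} {a b : V}
    (hG : G.Connected) (hr : (G.deleteEdges {s(a, b)}).Reachable a b) :
    (G.deleteEdges {s(a, b)}).Connected := by
  have key : ∀ {x y : V}, G.Walk x y → (G.deleteEdges {s(a, b)}).Reachable x y := by
    intro x y p
    induction p with
    | nil => exact Reachable.refl _
    | @cons x z y h p ih =>
      refine Reachable.trans ?_ ih
      by_cases he : s(x, z) = s(a, b)
      · rw [Sym2.eq_iff] at he
        rcases he with ⟨rfl, rfl⟩ | ⟨rfl, rfl⟩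
        · exact hr
        · exact hr.symm
      · exact SimpleGraph.Adj.reachable (by simp [he, h])
  have hnV : Nonempty V := hG.nonempty
  refine Connected.mk fun x y => ?_
  obtain ⟨p⟩ := hG.preconnected x y
  exact key p

/-- A connected spanning subgraph of `G` containing `F` with minimal number of edges,
where no cycle (in any graph on `V`) can consist entirely of `F`-edges, is a spanning tree
containing `F`. -/
lemma exists_min_tree {V : Type*} [Fintype V] (G F : SimpleGraph V)
    (hFG : F ≤ G) (hG : G.Connected)
    (hcyc : ∀ (H : SimpleGraph V) (u : V) (p : H.Walk u u), p.IsCycle →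
      ∃ e ∈ p.edges, e ∉ F.edgeSet) :
    ∃ T : SimpleGraph V, T ≤ G ∧ F ≤ T ∧ T.IsTree := by
  classical
  set A : Set ℕ :=
    {n | ∃ H : SimpleGraph V, (H ≤ G ∧ F ≤ H ∧ H.Connected) ∧ H.edgeSet.ncard = n} with hA
  have hAne : A.Nonempty := ⟨G.edgeSet.ncard, G, ⟨le_refl G, hFG, hG⟩, rfl⟩
  obtain ⟨H, ⟨hHG, hFH, hHc⟩, hcard⟩ := Nat.sInf_mem hAne
  refine ⟨H, hHG, hFH, ⟨hHc, ?_⟩⟩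
  intro u p hp
  obtain ⟨e, hep, heF⟩ := hcyc H u p hp
  have heH : e ∈ H.edgeSet := p.edges_subset_edgeSet hep
  induction e using Sym2.ind with
  | _ a b =>
  have hadj : H.Adj a b := heH
  -- the edge is not a bridge since it lies on a cycle
  have hnb : ¬ H.IsBridge s(a, b) := by
    rw [isBridge_iff_adj_and_forall_cycle_notMem]
    push_neg
    exact ⟨u, p, hp, hep⟩
    exact heH
  rw [isBridge_iff] at hnb
  push_neg at hnb
  have hr : (H \ fromEdgeSet {s(a, b)}).Reachable a b := hnb
  have hr' : (H.deleteEdges {s(a, b)}).Reachable a b := hr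
  set H' := H.deleteEdges {s(a, b)} with hH'
  have hH'c : H'.Connected := connected_deleteEdge_aux hHc hr'
  have hFH' : F ≤ H' := by
    intro x y hxy
    simp only [hH', deleteEdges_adj, Set.mem_singleton_iff]
    refine ⟨hFH hxy, fun hcontra => heF ?_⟩
    rw [← hcontra]
    exact hxy
  have hH'G : H' ≤ G := le_trans (deleteEdges_le _) hHG
  have hedge : H'.edgeSet = H.edgeSet \ {s(a, b)} := by
    simp [hH', edgeSet_deleteEdges]
  have hlt : H'.edgeSet.ncard < H.edgeSet.ncard := by
    rw [hedge]
    exact Set.ncard_diff_singleton_lt_of_mem heH (Set.toFinite _)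
  have hmem : H'.edgeSet.ncard ∈ A := ⟨H', ⟨hH'G, hFH', hH'c⟩, rfl⟩
  have := Nat.sInf_le hmem
  omega

theorem exists_spanningTree_same_domNum {V : Type*} [Fintype V]
    (G : SimpleGraph V) (hG : G.Connected) :
    ∃ T : SimpleGraph V, T ≤ G ∧ T.IsTree ∧ domNum T = domNum G := by
  classical
  -- a minimum dominating set of G
  have hne : {n | ∃ S : Finset V, DomSet G S ∧ S.card = n}.Nonempty :=
    ⟨Finset.univ.card, Finset.univ, fun v => Or.inl (Finset.mem_univ v), rfl⟩
  obtain ⟨S, hSdom, hScard⟩ := Nat.sInf_mem hne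
  -- choose for each vertex outside S a dominating neighbor
  have exu : ∀ v : V, v ∉ S → ∃ u, u ∈ S ∧ G.Adj u v := by
    intro v hv
    rcases hSdom v with h | ⟨u, hu, ha⟩
    · exact absurd h hv
    · exact ⟨u, hu, ha⟩
  set f : V → V := fun v => if h : ∃ u, u ∈ S ∧ G.Adj u v then h.choose else v with hfdef
  have hf : ∀ v, v ∉ S → f v ∈ S ∧ G.Adj (f v) v := by
    intro v hv
    have hex := exu v hv
    simp only [hfdef, dif_pos hex]
    exact hex.choose_spec
  -- the star forest F
  set F : SimpleGraph V :=
    { Adj := fun x y => (x ∉ S ∧ y = f x) ∨ (y ∉ S ∧ x = f y)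
      symm := by
        constructor
        intro x y h
        tauto
      loopless := by
        constructor
        intro x h
        rcases h with ⟨hx, hfx⟩ | ⟨hx, hfx⟩ <;>
          exact hx (hfx ▸ (hf x hx).1) } with hFdef
  have hFadj : ∀ x y, F.Adj x y ↔ (x ∉ S ∧ y = f x) ∨ (y ∉ S ∧ x = f y) := fun _ _ => Iff.rfl
  -- uniqueness of the F-neighbor of a vertex outside S
  have huniq : ∀ x y, x ∉ S → F.Adj x y → y = f x := by
    intro x y hx h
    rcases (hFadj x y).mp h with ⟨_, hy⟩ | ⟨_, hxy⟩
    · exact hy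
    · exact absurd (hxy ▸ (hf y ‹y ∉ S›).1) hx
  have hFG : F ≤ G := by
    intro x y h
    rcases (hFadj x y).mp h with ⟨hx, rfl⟩ | ⟨hy, rfl⟩
    · exact ((hf x hx).2).symm
    · exact (hf y hy).2
  -- no cycle consists entirely of F-edges
  have hcyc : ∀ (H : SimpleGraph V) (u : V) (p : H.Walk u u), p.IsCycle →
      ∃ e ∈ p.edges, e ∉ F.edgeSet := by
    intro H u p hp
    by_contra hcon
    push_neg at hcon
    -- find a vertex of the cycle outside S
    have hw : ∃ w ∈ p.support, w ∉ S := by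
      cases p with
      | nil => exact absurd rfl hp.ne_nil
      | @cons _ x _ h q =>
        have he : s(u, x) ∈ (SimpleGraph.Walk.cons h q).edges := by simp
        have hF : F.Adj u x := hcon _ he
        rcases (hFadj u x).mp hF with ⟨hu, _⟩ | ⟨hx, _⟩
        · exact ⟨u, SimpleGraph.Walk.start_mem_support _, hu⟩
        · exact ⟨x, SimpleGraph.Walk.snd_mem_support_of_mem_edges _ he, hx⟩
    obtain ⟨w, hwsup, hwS⟩ := hw
    set p' := p.rotate w hwsup with hp'def
    have hp' : p'.IsCycle := hp.rotate hwsup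
    have hcon' : ∀ e ∈ p'.edges, e ∈ F.edgeSet := by
      intro e he
      exact hcon e ((p.rotate_edges w hwsup).mem_iff.mp he)
    clear_value p'
    cases p' with
    | nil => exact absurd rfl hp'.ne_nil
    | @cons _ x₀ _ hadj q =>
      have hx₀ : F.Adj w x₀ := hcon' s(w, x₀) (by simp)
      have hx₀f : x₀ = f w := huniq w x₀ hwS hx₀
      have hx₀S : x₀ ∈ S := hx₀f ▸ (hf w hwS).1
      have hwx₀ : w ≠ x₀ := fun h => hwS (h ▸ hx₀S)
      rw [SimpleGraph.Walk.cons_isCycle_iff] at hp'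
      obtain ⟨hqpath, hqe⟩ := hp'
      -- q : Walk x₀ w ; look at its last edge via reverse
      obtain ⟨c, h2, r, hqr⟩ := SimpleGraph.Walk.exists_eq_cons_of_ne hwx₀ q.reverse
      have hwc : s(w, c) ∈ q.edges := by
        have : s(w, c) ∈ q.reverse.edges := by rw [hqr]; simp
        rwa [SimpleGraph.Walk.edges_reverse, List.mem_reverse] at this
      have hFc : F.Adj w c := hcon' s(w, c) (by simp [hwc])
      have : c = f w := huniq w c hwS hFc
      rw [this, ← hx₀f] at hwc
      exact hqe hwc
  obtain ⟨T, hTG, hFT, hTtree⟩ := exists_min_tree G F hFG hG hcyc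
  refine ⟨T, hTG, hTtree, le_antisymm ?_ ?_⟩
  · -- domNum T ≤ domNum G : S dominates T
    have hdomT : DomSet T S := by
      intro v
      by_cases hv : v ∈ S
      · exact Or.inl hv
      · exact Or.inr ⟨f v, (hf v hv).1, hFT ((hFadj (f v) v).mpr (Or.inr ⟨hv, rfl⟩))⟩
    have e1 : domNum T ≤ S.card := Nat.sInf_le ⟨S, hdomT, rfl⟩
    have e2 : S.card = domNum G := hScard
    exact le_of_le_of_eq e1 e2
  · -- domNum G ≤ domNum T : a minimum dominating set of T dominates G
    have hneT : {n | ∃ S' : Finset V, DomSet T S' ∧ S'.card = n}.Nonempty :=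
      ⟨Finset.univ.card, Finset.univ, fun v => Or.inl (Finset.mem_univ v), rfl⟩
    obtain ⟨S', hS'dom, hS'card⟩ := Nat.sInf_mem hneT
    have hdomG : DomSet G S' := by
      intro v
      rcases hS'dom v with h | ⟨u, hu, ha⟩
      · exact Or.inl h
      · exact Or.inr ⟨u, hu, hTG ha⟩
    have e1 : domNum G ≤ S'.card := Nat.sInf_le ⟨S', hdomG, rfl⟩
    have e2 : S'.card = domNum T := hS'card
    exact le_of_le_of_eq e1 e2
end

section
/- For any finite connected simple graph G and any three vertices x₁, x₂, x₃ of G, γ(G) ≥ (d(x₁,x₂) + d(x₁,x₃) + d(x₂,x₃))/6. -/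
open SimpleGraph Finset

namespace SixDomAux

variable {W : Type*}

/-- A vertex on a shortest path splits the distance. -/
lemma split_dist {H : SimpleGraph W} (hH : H.Connected) {a b m : W}
    (p : H.Walk a b) (hlen : p.length = H.dist a b) (hm : m ∈ p.support) :
    H.dist a m + H.dist m b = H.dist a b := by
  classical
  refine le_antisymm ?_ (hH.dist_triangle)
  have hspec := congrArg SimpleGraph.Walk.length (p.take_spec hm)
  rw [SimpleGraph.Walk.length_append] at hspec
  calc H.dist a m + H.dist m b ≤ (p.takeUntil m hm).length + (p.dropUntil m hm).length :=
        Nat.add_le_add (H.dist_le _) (H.dist_le _)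
    _ = p.length := hspec
    _ = H.dist a b := hlen

/-- In a connected graph on a finite vertex set, the sum of the three pairwise distances
among any three vertices is at most `2 * (card - 1)`. -/
lemma triple_dist_le [Fintype W] {H : SimpleGraph W} (hH : H.Connected) (a b c : W) :
    H.dist a b + H.dist a c + H.dist b c + 2 ≤ 2 * Fintype.card W := by
  classical
  obtain ⟨p, hp, hplen⟩ := hH.exists_path_of_dist a b
  -- choose m on p minimizing distance to c
  have hane : a ∈ p.support := p.start_mem_support
  obtain ⟨m, hmT, hmin⟩ := Finset.exists_min_image p.support.toFinset
    (fun v => H.dist c v) ⟨a, List.mem_toFinset.2 hane⟩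
  have hm : m ∈ p.support := List.mem_toFinset.1 hmT
  obtain ⟨q, hq, hqlen⟩ := hH.exists_path_of_dist c m
  -- q meets p only at m
  have hmeet : ∀ v ∈ q.support, v ∈ p.support → v = m := by
    intro v hvq hvp
    have h1 : H.dist c v + H.dist v m = H.dist c m := split_dist hH q hqlen hvq
    have h2 : H.dist c m ≤ H.dist c v := hmin v (List.mem_toFinset.2 hvp)
    have h3 : H.dist v m = 0 := by omega
    rcases (SimpleGraph.dist_eq_zero_iff_eq_or_not_reachable).1 h3 with h | h
    · exact h
    · exact absurd (hH.preconnected v m) h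
  -- counting
  set A : Finset W := p.support.toFinset with hA
  set B : Finset W := q.support.toFinset.erase m with hB
  have hdisj : Disjoint A B := by
    rw [Finset.disjoint_left]
    intro v hvA hvB
    have hvq : v ∈ q.support := List.mem_toFinset.1 (Finset.mem_of_mem_erase hvB)
    have := hmeet v hvq (List.mem_toFinset.1 hvA)
    exact (Finset.ne_of_mem_erase hvB) this
  have hAcard : A.card = H.dist a b + 1 := by
    rw [hA, List.toFinset_card_of_nodup hp.support_nodup,
      SimpleGraph.Walk.length_support, hplen]
  have hBcard : B.card = H.dist c m := by
    rw [hB, Finset.card_erase_of_mem (List.mem_toFinset.2 q.end_mem_support),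
      List.toFinset_card_of_nodup hq.support_nodup, SimpleGraph.Walk.length_support, hqlen]
    omega
  have hcount : H.dist a b + 1 + H.dist c m ≤ Fintype.card W := by
    have := Finset.card_le_univ (A ∪ B)
    rwa [Finset.card_union_of_disjoint hdisj, hAcard, hBcard] at this
  -- assemble
  have hsplit : H.dist a m + H.dist m b = H.dist a b := split_dist hH p hplen hm
  have hac : H.dist a c ≤ H.dist a m + H.dist c m := by
    have := hH.dist_triangle (u := a) (v := m) (w := c)
    rwa [SimpleGraph.dist_comm (u := m) (v := c)] at this
  have hbc : H.dist b c ≤ H.dist m b + H.dist c m := by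
    have := hH.dist_triangle (u := b) (v := m) (w := c)
    rw [SimpleGraph.dist_comm (u := m) (v := c), SimpleGraph.dist_comm (u := b) (v := m)] at this
    exact this
  omega

variable {V : Type*}

/-- The auxiliary graph on a dominating set: two dominators are adjacent when their
`G`-distance is at most 3. -/
def Hgraph (G : SimpleGraph V) (S : Finset V) : SimpleGraph ↥S where
  Adj s t := s ≠ t ∧ G.dist ↑s ↑t ≤ 3
  symm := by
    constructor
    rintro s t ⟨h1, h2⟩
    exact ⟨h1.symm, by rwa [G.dist_comm]⟩
  loopless := by constructor; rintro s ⟨h1, _⟩; exact h1 rfl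

lemma hgraph_reachable_of_close {G : SimpleGraph V} {S : Finset V} {s t : ↥S}
    (h : G.dist ↑s ↑t ≤ 3) : (Hgraph G S).Reachable s t := by
  by_cases hst : s = t
  · exact hst ▸ SimpleGraph.Reachable.refl s
  · exact SimpleGraph.Adj.reachable ⟨hst, h⟩

lemma exists_dominator {G : SimpleGraph V} {S : Finset V} (hS : DomSet G S) (v : V) :
    ∃ s : ↥S, G.dist ↑s v ≤ 1 := by
  rcases hS v with h | ⟨u, hu, hadj⟩
  · exact ⟨⟨v, h⟩, by simp [SimpleGraph.dist_self]⟩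
  · exact ⟨⟨u, hu⟩, le_of_eq (SimpleGraph.dist_eq_one_iff_adj.2 hadj)⟩

lemma hgraph_reachable_aux {G : SimpleGraph V} (hG : G.Connected) {S : Finset V}
    (hS : DomSet G S) : ∀ {u v : V} (w : G.Walk u v) (s t : ↥S),
    G.dist ↑s u ≤ 1 → G.dist ↑t v ≤ 1 → (Hgraph G S).Reachable s t := by
  intro u v w
  induction w with
  | nil =>
    intro s t hs ht
    apply hgraph_reachable_of_close
    calc G.dist ↑s ↑t ≤ G.dist ↑s _ + G.dist _ ↑t := hG.dist_triangle
      _ ≤ 1 + 1 := Nat.add_le_add hs (by rwa [G.dist_comm])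
      _ ≤ 3 := by norm_num
  | @cons u u' v hadj w' ih =>
    intro s t hs ht
    obtain ⟨s', hs'⟩ := exists_dominator hS u'
    have h1 : (Hgraph G S).Reachable s s' := by
      apply hgraph_reachable_of_close
      calc G.dist ↑s ↑s' ≤ G.dist ↑s u + G.dist u ↑s' := hG.dist_triangle
        _ ≤ 1 + (G.dist u u' + G.dist u' ↑s') := by
            refine Nat.add_le_add hs (hG.dist_triangle)
        _ ≤ 1 + (1 + 1) := by
            refine Nat.add_le_add_left (Nat.add_le_add ?_ (by rwa [G.dist_comm])) 1
            exact le_of_eq (SimpleGraph.dist_eq_one_iff_adj.2 hadj)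
        _ ≤ 3 := by norm_num
    exact h1.trans (ih s' t hs' ht)

lemma hgraph_connected {G : SimpleGraph V} (hG : G.Connected) {S : Finset V}
    (hS : DomSet G S) (hne : Nonempty ↥S) : (Hgraph G S).Connected := by
  rw [SimpleGraph.connected_iff]
  refine ⟨fun s t => ?_, hne⟩
  obtain ⟨w⟩ := hG.preconnected ↑s ↑t
  exact hgraph_reachable_aux hG hS w s t (by simp [SimpleGraph.dist_self])
    (by simp [SimpleGraph.dist_self])

lemma dist_le_three_mul {G : SimpleGraph V} (hG : G.Connected) {S : Finset V}
    (hS : DomSet G S) (hne : Nonempty ↥S) (s t : ↥S) :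
    G.dist ↑s ↑t ≤ 3 * (Hgraph G S).dist s t := by
  obtain ⟨w, hwlen⟩ :=
    ((hgraph_connected hG hS hne).preconnected s t).exists_walk_length_eq_dist
  rw [← hwlen]
  clear hwlen
  induction w with
  | nil => simp [SimpleGraph.dist_self]
  | @cons a a' b hadj w' ih =>
    calc G.dist ↑a ↑b ≤ G.dist ↑a ↑a' + G.dist ↑a' ↑b := hG.dist_triangle
      _ ≤ 3 + 3 * w'.length := Nat.add_le_add hadj.2 ih
      _ = 3 * (SimpleGraph.Walk.cons hadj w').length := by
          rw [SimpleGraph.Walk.length_cons]; ring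

end SixDomAux

theorem six_domNum_ge_triangle {V : Type*} [Fintype V]
    (G : SimpleGraph V) (hG : G.Connected) (x₁ x₂ x₃ : V) :
    6 * domNum G ≥ G.dist x₁ x₂ + G.dist x₁ x₃ + G.dist x₂ x₃ := by
  classical
  -- obtain a dominating set of size `domNum G`
  have hmem : domNum G ∈ {n | ∃ S : Finset V, DomSet G S ∧ S.card = n} := by
    apply Nat.sInf_mem
    exact ⟨(Finset.univ : Finset V).card, Finset.univ,
      fun v => Or.inl (Finset.mem_univ v), rfl⟩
  obtain ⟨S, hS, hcard⟩ := hmem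
  obtain ⟨s₁, hs₁⟩ := SixDomAux.exists_dominator hS x₁
  obtain ⟨s₂, hs₂⟩ := SixDomAux.exists_dominator hS x₂
  obtain ⟨s₃, hs₃⟩ := SixDomAux.exists_dominator hS x₃
  have hne : Nonempty ↥S := ⟨s₁⟩
  have hHconn := SixDomAux.hgraph_connected hG hS hne
  -- triangle bounds through the dominators
  have key : ∀ (x y : V) (s t : ↥S), G.dist ↑s x ≤ 1 → G.dist ↑t y ≤ 1 →
      G.dist x y ≤ 2 + 3 * (SixDomAux.Hgraph G S).dist s t := by
    intro x y s t hsx hty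
    calc G.dist x y ≤ G.dist x ↑s + G.dist ↑s y := hG.dist_triangle
      _ ≤ G.dist x ↑s + (G.dist ↑s ↑t + G.dist ↑t y) :=
          Nat.add_le_add_left hG.dist_triangle _
      _ ≤ 1 + (3 * (SixDomAux.Hgraph G S).dist s t + 1) := by
          refine Nat.add_le_add (by rwa [G.dist_comm]) (Nat.add_le_add ?_ hty)
          exact SixDomAux.dist_le_three_mul hG hS hne s t
      _ = 2 + 3 * (SixDomAux.Hgraph G S).dist s t := by ring
  have h12 := key x₁ x₂ s₁ s₂ hs₁ hs₂
  have h13 := key x₁ x₃ s₁ s₃ hs₁ hs₃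
  have h23 := key x₂ x₃ s₂ s₃ hs₂ hs₃
  have htriple := SixDomAux.triple_dist_le hHconn s₁ s₂ s₃
  have hScard : Fintype.card ↥S = S.card := Fintype.card_coe S
  omega
end

section
/- Let G be a finite connected simple graph and x₁, x₂, x₃ vertices with γ(G) = (d(x₁,x₂) + d(x₁,x₃) + d(x₂,x₃))/6. Then for every pair u, v among x₁, x₂, x₃ we have d(u,v) ≡ 2 (mod 3). -/
open SimpleGraph Finset

section Aux

variable {V : Type*} {G : SimpleGraph V}

/-- Along any walk, the distance from the start to the `i`-th vertex is at most `i`. -/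
lemma dist_getVert_le (hG : G.Connected) {u v : V} (W : G.Walk u v) (i : ℕ) :
    G.dist u (W.getVert i) ≤ i := by
  induction W generalizing i with
  | @nil z =>
    have h0 : (SimpleGraph.Walk.nil : G.Walk z z).getVert i = z :=
      SimpleGraph.Walk.getVert_of_length_le _ (by simp)
    rw [h0]
    simp [SimpleGraph.dist_self]
  | @cons u' a v' h q ih =>
    cases i with
    | zero => simp [SimpleGraph.Walk.getVert_zero, SimpleGraph.dist_self]
    | succ n =>
      rw [SimpleGraph.Walk.getVert_cons_succ]
      calc G.dist u' (q.getVert n) ≤ G.dist u' a + G.dist a (q.getVert n) := hG.dist_triangle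
        _ ≤ 1 + n := by
            have h1 : G.dist u' a = 1 := SimpleGraph.dist_eq_one_iff_adj.mpr h
            have := ih n
            omega
        _ = n + 1 := by omega

/-- On a shortest walk, the `i`-th vertex is exactly at distance `i` from the start and
`length - i` from the end. -/
lemma getVert_dist (hG : G.Connected) {u v : V} (W : G.Walk u v)
    (hW : W.length = G.dist u v) {i : ℕ} (hi : i ≤ W.length) :
    G.dist u (W.getVert i) = i ∧ G.dist (W.getVert i) v = W.length - i := by
  have h1 : G.dist u (W.getVert i) ≤ i := dist_getVert_le hG W i
  have h2 : G.dist (W.getVert i) v ≤ W.length - i := by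
    have := dist_getVert_le hG W.reverse (W.length - i)
    rw [SimpleGraph.Walk.getVert_reverse] at this
    have hii : W.length - (W.length - i) = i := by omega
    rw [hii] at this
    rw [SimpleGraph.dist_comm]
    exact this
  have h3 : G.dist u v ≤ G.dist u (W.getVert i) + G.dist (W.getVert i) v := hG.dist_triangle
  omega

/-- A family of vertices pairwise at distance at least 3 gives a lower bound on the
domination number. -/
lemma packing_le_domNum [Fintype V] (hG : G.Connected) {n : ℕ} (x : Fin n → V)
    (hx : ∀ i j : Fin n, i ≠ j → 3 ≤ G.dist (x i) (x j)) : n ≤ domNum G := by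
  classical
  have hne : {m | ∃ S : Finset V, DomSet G S ∧ S.card = m}.Nonempty :=
    ⟨(Finset.univ : Finset V).card, Finset.univ, fun v => Or.inl (Finset.mem_univ v), rfl⟩
  obtain ⟨S, hS, hcard⟩ : ∃ S : Finset V, DomSet G S ∧ S.card = domNum G := Nat.sInf_mem hne
  have hdom : ∀ i : Fin n, ∃ s, s ∈ S ∧ G.dist s (x i) ≤ 1 := by
    intro i
    rcases hS (x i) with h | ⟨s, hs, hadj⟩
    · exact ⟨x i, h, by simp [SimpleGraph.dist_self]⟩
    · exact ⟨s, hs, le_of_eq (SimpleGraph.dist_eq_one_iff_adj.mpr hadj)⟩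
  choose f hfS hf1 using hdom
  have hinj : Function.Injective f := by
    intro i j hij
    by_contra hne2
    have h3 : 3 ≤ G.dist (x i) (x j) := hx i j hne2
    have t1 : G.dist (x i) (x j) ≤ G.dist (x i) (f i) + G.dist (f i) (x j) := hG.dist_triangle
    have t2 : G.dist (x i) (f i) = G.dist (f i) (x i) := SimpleGraph.dist_comm
    have t3 : G.dist (f i) (x j) = G.dist (f j) (x j) := by rw [hij]
    have := hf1 i
    have := hf1 j
    omega
  have hle : (Finset.univ : Finset (Fin n)).card ≤ S.card :=
    Finset.card_le_card_of_injOn f (fun i _ => hfS i) hinj.injOn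
  simpa [hcard] using hle

/-- Core packing construction: points spaced 3 apart along a shortest `v`–`w` walk, plus
points near `u` along a shortest `u`–`v` walk. -/
lemma core [Fintype V] (hG : G.Connected) (u v w : V) (a b c n₁ n₂ : ℕ)
    (h1 : G.dist u v = a + b) (h2 : G.dist u w = a + c) (h3 : G.dist v w = b + c)
    (hn : 1 ≤ n₁)
    (H1 : ∀ t, t < n₁ → 3 * t ≤ b + c)
    (H2 : ∀ t, t < n₁ → ∀ j, j < n₂ →
      3 * j + 3 + 3 * t ≤ a + b ∨ 3 * j + 3 + b + c ≤ a + c + 3 * t) :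
    n₁ + n₂ ≤ domNum G := by
  obtain ⟨R, hR⟩ := hG.exists_walk_length_eq_dist v w
  obtain ⟨P, hP⟩ := hG.exists_walk_length_eq_dist u v
  set r : ℕ → V := fun t => R.getVert (3 * t) with hr
  set p : ℕ → V := fun j => P.getVert (3 * j) with hp
  have hRlen : R.length = b + c := by rw [hR, h3]
  have hPlen : P.length = a + b := by rw [hP, h1]
  have hrv : ∀ t, t < n₁ → G.dist v (r t) = 3 * t ∧ G.dist (r t) w = (b + c) - 3 * t := by
    intro t ht
    have := getVert_dist hG R hR (i := 3 * t) (by rw [hRlen]; exact H1 t ht)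
    rw [hRlen] at this
    exact this
  have hjb : ∀ j, j < n₂ → 3 * j + 3 ≤ a + b := by
    intro j hj
    rcases H2 0 hn j hj with h | h <;> omega
  have hpu : ∀ j, j < n₂ → G.dist u (p j) = 3 * j := by
    intro j hj
    exact (getVert_dist hG P hP (i := 3 * j) (by rw [hPlen]; have := hjb j hj; omega)).1
  -- distance from u to each r t is large
  have hur : ∀ t, t < n₁ → ∀ j, j < n₂ → 3 * j + 3 ≤ G.dist u (r t) := by
    intro t ht j hj
    have t1 : G.dist u v ≤ G.dist u (r t) + G.dist (r t) v := hG.dist_triangle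
    have t2 : G.dist u w ≤ G.dist u (r t) + G.dist (r t) w := hG.dist_triangle
    have e1 : G.dist (r t) v = 3 * t := by rw [SimpleGraph.dist_comm]; exact (hrv t ht).1
    have e2 : G.dist (r t) w = (b + c) - 3 * t := (hrv t ht).2
    have e3 := H1 t ht
    rcases H2 t ht j hj with h | h <;> omega
  -- pairwise distances
  have hrr : ∀ t t', t < n₁ → t' < n₁ → t ≠ t' → 3 ≤ G.dist (r t) (r t') := by
    intro t t' ht ht' hne2
    have e1 : G.dist v (r t) = 3 * t := (hrv t ht).1
    have e2 : G.dist v (r t') = 3 * t' := (hrv t' ht').1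
    have t1 : G.dist v (r t') ≤ G.dist v (r t) + G.dist (r t) (r t') := hG.dist_triangle
    have t2 : G.dist v (r t) ≤ G.dist v (r t') + G.dist (r t') (r t) := hG.dist_triangle
    have t3 : G.dist (r t') (r t) = G.dist (r t) (r t') := SimpleGraph.dist_comm
    omega
  have hpp : ∀ j j', j < n₂ → j' < n₂ → j ≠ j' → 3 ≤ G.dist (p j) (p j') := by
    intro j j' hj hj' hne2
    have e1 : G.dist u (p j) = 3 * j := hpu j hj
    have e2 : G.dist u (p j') = 3 * j' := hpu j' hj'
    have t1 : G.dist u (p j') ≤ G.dist u (p j) + G.dist (p j) (p j') := hG.dist_triangle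
    have t2 : G.dist u (p j) ≤ G.dist u (p j') + G.dist (p j') (p j) := hG.dist_triangle
    have t3 : G.dist (p j') (p j) = G.dist (p j) (p j') := SimpleGraph.dist_comm
    omega
  have hpr : ∀ t j, t < n₁ → j < n₂ → 3 ≤ G.dist (p j) (r t) := by
    intro t j ht hj
    have e1 : G.dist u (p j) = 3 * j := hpu j hj
    have e2 : 3 * j + 3 ≤ G.dist u (r t) := hur t ht j hj
    have t1 : G.dist u (r t) ≤ G.dist u (p j) + G.dist (p j) (r t) := hG.dist_triangle
    omega
  -- assemble the packing
  set x : Fin (n₁ + n₂) → V := fun i => if (i : ℕ) < n₁ then r i else p ((i : ℕ) - n₁) with hxdef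
  have hx : ∀ i j : Fin (n₁ + n₂), i ≠ j → 3 ≤ G.dist (x i) (x j) := by
    intro i j hij
    have hij' : (i : ℕ) ≠ (j : ℕ) := fun h => hij (Fin.ext h)
    have hi2 := i.isLt
    have hj2 := j.isLt
    by_cases hi : (i : ℕ) < n₁ <;> by_cases hj : (j : ℕ) < n₁ <;>
      simp only [hxdef, hi, hj, if_pos, if_neg, if_true, if_false]
    · exact hrr _ _ hi hj hij'
    · rw [SimpleGraph.dist_comm]
      exact hpr _ _ hi (by omega)
    · exact hpr _ _ hj (by omega)
    · exact hpp _ _ (by omega) (by omega) (by omega)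
  exact packing_le_domNum hG x hx

end Aux

theorem equality_case_mod_three {V : Type*} [Fintype V]
    (G : SimpleGraph V) (hG : G.Connected) (x₁ x₂ x₃ : V)
    (heq : 6 * domNum G = G.dist x₁ x₂ + G.dist x₁ x₃ + G.dist x₂ x₃) :
    G.dist x₁ x₂ % 3 = 2 ∧ G.dist x₁ x₃ % 3 = 2 ∧ G.dist x₂ x₃ % 3 = 2 := by
  classical
  have T1 : G.dist x₂ x₃ ≤ G.dist x₁ x₂ + G.dist x₁ x₃ := by
    have := hG.dist_triangle (u := x₂) (v := x₁) (w := x₃)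
    have hc : G.dist x₂ x₁ = G.dist x₁ x₂ := SimpleGraph.dist_comm
    omega
  have T2 : G.dist x₁ x₃ ≤ G.dist x₁ x₂ + G.dist x₂ x₃ := hG.dist_triangle
  have T3 : G.dist x₁ x₂ ≤ G.dist x₁ x₃ + G.dist x₂ x₃ := by
    have := hG.dist_triangle (u := x₁) (v := x₃) (w := x₂)
    have hc : G.dist x₃ x₂ = G.dist x₂ x₃ := SimpleGraph.dist_comm
    omega
  obtain ⟨a, b, c, ha, hb, hc⟩ :
      ∃ a b c : ℕ, G.dist x₁ x₂ = a + b ∧ G.dist x₁ x₃ = a + c ∧ G.dist x₂ x₃ = b + c := by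
    refine ⟨(G.dist x₁ x₂ + G.dist x₁ x₃ - G.dist x₂ x₃) / 2,
      (G.dist x₁ x₂ + G.dist x₂ x₃ - G.dist x₁ x₃) / 2,
      (G.dist x₁ x₃ + G.dist x₂ x₃ - G.dist x₁ x₂) / 2, ?_, ?_, ?_⟩ <;> omega
  have hsum : 2 * (a + b + c) = 6 * domNum G := by omega
  by_cases hgood : a % 3 = 1 ∧ b % 3 = 1 ∧ c % 3 = 1
  · obtain ⟨h1, h2, h3⟩ := hgood
    omega
  · exfalso
    have hmod3 : (a + b + c) % 3 = 0 := by omega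
    -- in each remaining case we construct a packing of size (a+b+c)/3 + 1
    have key : ∃ N : ℕ, 3 * N = a + b + c + 3 ∧ N ≤ domNum G := by
      rcases show a % 3 = 0 ∨ b % 3 = 0 ∨ c % 3 = 0 ∨
          (a % 3 = 2 ∧ b % 3 = 2 ∧ c % 3 = 2) by omega with h | h | h | h
      · refine ⟨(b + c) / 3 + 1 + a / 3, by omega, ?_⟩
        exact core hG x₁ x₂ x₃ a b c ((b + c) / 3 + 1) (a / 3) ha hb hc (by omega)
          (fun t ht => by omega) (fun t ht j hj => by omega)
      · refine ⟨(a + c) / 3 + 1 + b / 3, by omega, ?_⟩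
        refine core hG x₂ x₁ x₃ b a c ((a + c) / 3 + 1) (b / 3)
          (by rw [SimpleGraph.dist_comm]; omega) (by omega) (by omega) (by omega)
          (fun t ht => by omega) (fun t ht j hj => by omega)
      · refine ⟨(a + b) / 3 + 1 + c / 3, by omega, ?_⟩
        refine core hG x₃ x₁ x₂ c a b ((a + b) / 3 + 1) (c / 3)
          (by rw [SimpleGraph.dist_comm]; omega) (by rw [SimpleGraph.dist_comm]; omega)
          (by omega) (by omega)
          (fun t ht => by omega) (fun t ht j hj => by omega)
      · obtain ⟨h1, h2, h3⟩ := h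
        refine ⟨(b + c + 2) / 3 + (a + 1) / 3, by omega, ?_⟩
        exact core hG x₁ x₂ x₃ a b c ((b + c + 2) / 3) ((a + 1) / 3) ha hb hc (by omega)
          (fun t ht => by omega) (fun t ht j hj => by omega)
    obtain ⟨N, hN1, hN2⟩ := key
    omega
end

section
/- For any integer r ≥ 3, any finite connected simple graph G, and any r vertices x₁, …, x_r of G (not necessarily distinct), γ(G) ≥ (1/(r(r−1))) · Σ_{1≤i<j≤r} d(x_i, x_j). -/
open SimpleGraph Finset

private lemma dist_getVert_le' {V : Type*} {G : SimpleGraph V} {u w : V} (p : G.Walk u w)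
    (i : ℕ) : G.dist (p.getVert i) w ≤ p.length - i := by
  induction p generalizing i with
  | nil => simp [SimpleGraph.Walk.getVert]
  | cons h q ih =>
    cases i with
    | zero => simpa using SimpleGraph.dist_le (SimpleGraph.Walk.cons h q)
    | succ n =>
      simpa [SimpleGraph.Walk.getVert_cons_succ, Nat.succ_sub_succ] using ih n

private lemma arith_ineq' (r a : ℕ) (hr : 3 ≤ r) (ha : a ≤ r) :
    a * (3 * (r - a)) + (r - a) * (3 * a) ≤ 2 * (r * (r - 1)) := by
  obtain ⟨b, rfl⟩ : ∃ b, r = a + b := ⟨r - a, by omega⟩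
  have h1 : a + b - a = b := by omega
  rw [h1]
  rcases Nat.lt_or_ge (a + b) 4 with h4 | h4
  · have ha3 : a ≤ 3 := by omega
    have hb3 : b ≤ 3 := by omega
    interval_cases a <;> interval_cases b <;> omega
  · have h5 : 1 ≤ a + b := by omega
    zify [h5]
    nlinarith [sq_nonneg ((a : ℤ) - b),
      mul_nonneg (by omega : (0:ℤ) ≤ (a:ℤ) + b) (by omega : (0:ℤ) ≤ (a:ℤ) + b - 4)]

private lemma cross_edge {V : Type*} {G : SimpleGraph V} (hG : G.Connected) {S T : Finset V}
    (hS : DomSet G S) (hTS : T ⊆ S) (hT : T.Nonempty) (hne : T ≠ S) :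
    ∃ u ∈ T, ∃ v ∈ S, v ∉ T ∧ G.dist u v ≤ 3 := by
  classical
  obtain ⟨v₀, hv₀S, hv₀T⟩ : ∃ v, v ∈ S ∧ v ∉ T := by
    by_contra h
    push_neg at h
    exact hne (Finset.Subset.antisymm hTS (fun v hv => h v hv))
  set P : Finset (V × V) := T ×ˢ (S.filter (· ∉ T)) with hP
  have hPne : P.Nonempty := ⟨(hT.choose, v₀), by
    simp [hP, Finset.mem_product, hT.choose_spec, hv₀S, hv₀T]⟩
  obtain ⟨p, hpP, hmin⟩ := Finset.exists_min_image P (fun p => G.dist p.1 p.2) hPne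
  simp only [hP, Finset.mem_product, Finset.mem_filter] at hpP
  obtain ⟨hpT, hpS, hpnT⟩ := hpP
  by_cases h3 : G.dist p.1 p.2 ≤ 3
  · exact ⟨p.1, hpT, p.2, hpS, hpnT, h3⟩
  exfalso
  push_neg at h3
  obtain ⟨q, hq⟩ := (hG.preconnected p.1 p.2).exists_walk_length_eq_dist
  have hlen : 3 < q.length := by omega
  set m := q.getVert 2 with hm
  have h01 : G.Adj p.1 (q.getVert 1) := by
    have := q.adj_getVert_succ (i := 0) (by omega)
    rwa [q.getVert_zero] at this
  have h12 : G.Adj (q.getVert 1) m := q.adj_getVert_succ (by omega)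
  have hum : G.dist p.1 m ≤ 2 := by
    calc G.dist p.1 m ≤ G.dist p.1 (q.getVert 1) + G.dist (q.getVert 1) m :=
          hG.dist_triangle
      _ ≤ 1 + 1 := by
          gcongr <;> simp [SimpleGraph.dist_eq_one_iff_adj.mpr, h01, h12,
            le_of_eq (SimpleGraph.dist_eq_one_iff_adj.mpr h01)]
      _ ≤ 2 := by omega
  have hmw : G.dist m p.2 ≤ G.dist p.1 p.2 - 2 := by
    have := dist_getVert_le' q 2
    rwa [hq] at this
  obtain ⟨s, hsS, hsm⟩ : ∃ s ∈ S, G.dist s m ≤ 1 := by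
    rcases hS m with h | ⟨s, hsS, hadj⟩
    · exact ⟨m, h, by simp [SimpleGraph.dist_self]⟩
    · exact ⟨s, hsS, le_of_eq (SimpleGraph.dist_eq_one_iff_adj.mpr hadj)⟩
  by_cases hsT : s ∈ T
  · have hmem : (s, p.2) ∈ P := by simp [hP, Finset.mem_product, hsT, hpS, hpnT]
    have hge := hmin _ hmem
    have hle : G.dist s p.2 ≤ G.dist s m + G.dist m p.2 := hG.dist_triangle
    simp only at hge
    omega
  · have hmem : (p.1, s) ∈ P := by simp [hP, Finset.mem_product, hpT, hsS, hsT]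
    have hge := hmin _ hmem
    have hle : G.dist p.1 s ≤ G.dist p.1 m + G.dist m s := hG.dist_triangle
    have : G.dist m s ≤ 1 := by rwa [SimpleGraph.dist_comm] at hsm
    simp only at hge
    omega

private lemma enum_exists {V : Type*} {G : SimpleGraph V} (hG : G.Connected) {S : Finset V}
    (hS : DomSet G S) :
    ∀ n, 1 ≤ n → n ≤ S.card → ∃ T : Finset V, T ⊆ S ∧ T.card = n ∧ ∃ w : Fin n → V,
      (∀ t ∈ T, ∃ m, t = w m) ∧ (∀ m, w m ∈ T) ∧
      (∀ m : Fin n, 0 < (m : ℕ) → ∃ j : Fin n, (j : ℕ) < (m : ℕ) ∧ G.dist (w j) (w m) ≤ 3) := by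
  classical
  intro n
  induction n with
  | zero => omega
  | succ n ih =>
    intro _ hcard
    by_cases hn0 : n = 0
    · subst hn0
      obtain ⟨t₀, ht₀⟩ : S.Nonempty := Finset.card_pos.mp (by omega)
      refine ⟨{t₀}, by simpa using ht₀, by simp, fun _ => t₀, ?_, by simp, ?_⟩
      · intro t ht; exact ⟨0, by simpa using ht⟩
      · intro m hm
        have : (m : ℕ) = 0 := by omega
        omega
    · obtain ⟨T, hTS, hTcard, w, hcover, hmem, hchain⟩ := ih (by omega) (by omega)
      have hTneS : T ≠ S := by
        intro h; rw [h] at hTcard; omega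
      have hTne : T.Nonempty := Finset.card_pos.mp (by omega)
      obtain ⟨u, huT, v, hvS, hvT, hd⟩ := cross_edge hG hS hTS hTne hTneS
      refine ⟨insert v T, ?_, ?_, Fin.snoc w v, ?_, ?_, ?_⟩
      · exact Finset.insert_subset hvS hTS
      · rw [Finset.card_insert_of_notMem hvT, hTcard]
      · intro t ht
        rcases Finset.mem_insert.mp ht with h | h
        · exact ⟨Fin.last n, by simp [h, Fin.snoc_last]⟩
        · obtain ⟨m, hm⟩ := hcover t h
          exact ⟨m.castSucc, by simp [Fin.snoc_castSucc, hm]⟩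
      · intro m
        induction m using Fin.lastCases with
        | last => simp [Fin.snoc_last]
        | cast i => simp only [Fin.snoc_castSucc]; exact Finset.mem_insert_of_mem (hmem i)
      · intro m hm0
        induction m using Fin.lastCases with
        | last =>
          obtain ⟨j, hj⟩ := hcover u huT
          refine ⟨j.castSucc, ?_, ?_⟩
          · simp
          · rw [Fin.snoc_castSucc, Fin.snoc_last, ← hj]; exact hd
        | cast i =>
          have hi0 : 0 < (i : ℕ) := by simpa using hm0
          obtain ⟨j, hj1, hj2⟩ := hchain i hi0
          refine ⟨j.castSucc, by simpa using hj1, ?_⟩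
          rw [Fin.snoc_castSucc, Fin.snoc_castSucc]
          exact hj2

private lemma sum_bound {V : Type*} {G : SimpleGraph V} (hG : G.Connected) (r : ℕ) (hr : 3 ≤ r) :
    ∀ n, 1 ≤ n → ∀ w : Fin n → V,
      (∀ m : Fin n, 0 < (m : ℕ) → ∃ j : Fin n, (j : ℕ) < (m : ℕ) ∧ G.dist (w j) (w m) ≤ 3) →
      ∀ f : Fin r → Fin n,
        ∑ i : Fin r, ∑ j : Fin r, G.dist (w (f i)) (w (f j)) ≤ 2 * (r * (r - 1)) * (n - 1) := by
  classical
  intro n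
  induction n with
  | zero => omega
  | succ n ih =>
    intro _ w hchain f
    by_cases hn0 : n = 0
    · subst hn0
      have hz : ∀ i j : Fin r, G.dist (w (f i)) (w (f j)) = 0 := by
        intro i j
        have h1 := (f i).isLt
        have h2 := (f j).isLt
        rw [show f i = f j from Fin.ext (by omega), SimpleGraph.dist_self]
      simp [hz]
    · -- n ≥ 1
      have hn1 : 1 ≤ n := by omega
      obtain ⟨j₀, hj₀, hd₀⟩ := hchain (Fin.last n) (by simp; omega)
      have hj₀n : (j₀ : ℕ) < n := by simpa using hj₀
      set w' : Fin n → V := fun i => w i.castSucc with hw'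
      have hchain' : ∀ m : Fin n, 0 < (m : ℕ) → ∃ j : Fin n, (j : ℕ) < (m : ℕ) ∧
          G.dist (w' j) (w' m) ≤ 3 := by
        intro m hm
        obtain ⟨j, hj1, hj2⟩ := hchain m.castSucc (by simpa using hm)
        have hjn : (j : ℕ) < n := by
          have : (m.castSucc : ℕ) = (m : ℕ) := rfl
          omega
        refine ⟨⟨(j : ℕ), hjn⟩, by simpa using hj1, ?_⟩
        have hcast : (⟨(j : ℕ), hjn⟩ : Fin n).castSucc = j := by
          ext; simp
        rw [hw']
        simp only
        rw [hcast]
        exact hj2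
      set f' : Fin r → Fin n := fun i =>
        if h : (f i : ℕ) = n then ⟨(j₀ : ℕ), hj₀n⟩ else ⟨(f i : ℕ), by omega⟩ with hf'
      have hcast1 : ((⟨(j₀ : ℕ), hj₀n⟩ : Fin n).castSucc) = j₀ := by ext; simp
      have hmove_yes : ∀ i, (f i : ℕ) = n → w' (f' i) = w j₀ ∧ w (f i) = w (Fin.last n) := by
        intro i h
        have hfi : f' i = ⟨(j₀ : ℕ), hj₀n⟩ := by
          simp only [hf']
          rw [dif_pos h]
        have hlast : f i = Fin.last n := by ext; simpa using h
        constructor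
        · show w ((f' i).castSucc) = w j₀
          rw [hfi, hcast1]
        · rw [hlast]
      have hmove_no : ∀ i, (f i : ℕ) ≠ n → w' (f' i) = w (f i) := by
        intro i h
        have hfi : (f' i).castSucc = f i := by
          ext
          simp only [hf', Fin.coe_castSucc]
          rw [dif_neg h]
        show w ((f' i).castSucc) = w (f i)
        rw [hfi]
      have key : ∀ i j, G.dist (w (f i)) (w (f j)) ≤ G.dist (w' (f' i)) (w' (f' j)) +
          (if (f i : ℕ) = n then (if (f j : ℕ) = n then 0 else 3)
           else (if (f j : ℕ) = n then 3 else 0)) := by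
        intro i j
        by_cases hi : (f i : ℕ) = n <;> by_cases hj : (f j : ℕ) = n <;>
          simp only [hi, hj, if_pos, if_neg, if_true, if_false]
        · have : f i = f j := by ext; omega
          rw [this, SimpleGraph.dist_self]
          omega
        · obtain ⟨hy1, hy2⟩ := hmove_yes i hi
          rw [hy1, hy2, hmove_no j hj]
          calc G.dist (w (Fin.last n)) (w (f j)) ≤
              G.dist (w (Fin.last n)) (w j₀) + G.dist (w j₀) (w (f j)) := hG.dist_triangle
            _ ≤ 3 + G.dist (w j₀) (w (f j)) := by
                rw [SimpleGraph.dist_comm] at hd₀; omega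
            _ = G.dist (w j₀) (w (f j)) + 3 := by omega
        · obtain ⟨hy1, hy2⟩ := hmove_yes j hj
          rw [hy1, hy2, hmove_no i hi]
          calc G.dist (w (f i)) (w (Fin.last n)) ≤
              G.dist (w (f i)) (w j₀) + G.dist (w j₀) (w (Fin.last n)) := hG.dist_triangle
            _ ≤ G.dist (w (f i)) (w j₀) + 3 := by omega
        · rw [hmove_no i hi, hmove_no j hj]
          omega
      -- sum up
      have hsum1 : ∑ i : Fin r, ∑ j : Fin r, G.dist (w (f i)) (w (f j)) ≤
          (∑ i : Fin r, ∑ j : Fin r, G.dist (w' (f' i)) (w' (f' j))) +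
          ∑ i : Fin r, ∑ j : Fin r,
            (if (f i : ℕ) = n then (if (f j : ℕ) = n then 0 else 3)
             else (if (f j : ℕ) = n then 3 else 0)) := by
        rw [← Finset.sum_add_distrib]
        refine Finset.sum_le_sum fun i _ => ?_
        rw [← Finset.sum_add_distrib]
        exact Finset.sum_le_sum fun j _ => key i j
      have hIH := ih hn1 w' hchain' f'
      -- compute the error sum
      have hcardtot : (univ.filter (fun i => (f i : ℕ) = n)).card +
          (univ.filter (fun i => ¬ (f i : ℕ) = n)).card = r := by
        rw [Finset.card_filter_add_card_filter_not]
        simp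
      have hinner : ∀ i : Fin r,
          (∑ j : Fin r, (if (f i : ℕ) = n then (if (f j : ℕ) = n then 0 else 3)
             else (if (f j : ℕ) = n then 3 else 0)))
          = (if (f i : ℕ) = n then 3 * (univ.filter (fun j : Fin r => ¬ (f j : ℕ) = n)).card
             else 3 * (univ.filter (fun j : Fin r => (f j : ℕ) = n)).card) := by
        intro i
        by_cases hi : (f i : ℕ) = n <;>
          simp only [hi, if_true, if_false, eq_self_iff_true, not_true, not_false_iff] <;>
          rw [Finset.sum_ite, Finset.sum_const, Finset.sum_const] <;>
          simp [mul_comm]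
      have herr : (∑ i : Fin r, ∑ j : Fin r,
            (if (f i : ℕ) = n then (if (f j : ℕ) = n then 0 else 3)
             else (if (f j : ℕ) = n then 3 else 0)))
          = (univ.filter (fun i : Fin r => (f i : ℕ) = n)).card *
              (3 * (univ.filter (fun j : Fin r => ¬ (f j : ℕ) = n)).card) +
            (univ.filter (fun i : Fin r => ¬ (f i : ℕ) = n)).card *
              (3 * (univ.filter (fun j : Fin r => (f j : ℕ) = n)).card) := by
        rw [Finset.sum_congr rfl fun i _ => hinner i, Finset.sum_ite, Finset.sum_const,
          Finset.sum_const]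
        simp [mul_comm]
      set a : ℕ := (univ.filter (fun i : Fin r => (f i : ℕ) = n)).card with haa
      have har : a ≤ r := by omega
      have hbb : (univ.filter (fun i : Fin r => ¬ (f i : ℕ) = n)).card = r - a := by omega
      rw [hbb] at herr
      have harith := arith_ineq' r a hr har
      have hfinal : 2 * (r * (r - 1)) * (n - 1) + 2 * (r * (r - 1)) ≤
          2 * (r * (r - 1)) * (n + 1 - 1) := by
        obtain ⟨m, rfl⟩ : ∃ m, n = m + 1 := ⟨n - 1, by omega⟩
        simp only [Nat.add_sub_cancel]
        exact le_of_eq (by ring)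
      omega

private lemma double_sum {r : ℕ} (g : Fin r → Fin r → ℕ) (hsymm : ∀ i j, g i j = g j i)
    (hdiag : ∀ i, g i i = 0) :
    2 * ∑ p ∈ (univ ×ˢ univ).filter (fun p : Fin r × Fin r => p.1 < p.2), g p.1 p.2 =
      ∑ i : Fin r, ∑ j : Fin r, g i j := by
  classical
  have htot : ∑ i : Fin r, ∑ j : Fin r, g i j
      = ∑ p ∈ (univ ×ˢ univ), g (Prod.fst p) (Prod.snd p) := by
    rw [Finset.sum_product]
  rw [htot, ← Finset.sum_filter_add_sum_filter_not (univ ×ˢ univ)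
    (fun p : Fin r × Fin r => p.1 < p.2)]
  have h1 : ((univ ×ˢ univ).filter (fun p : Fin r × Fin r => ¬ p.1 < p.2)).filter
      (fun p : Fin r × Fin r => p.2 < p.1)
      = (univ ×ˢ univ).filter (fun p : Fin r × Fin r => p.2 < p.1) := by
    rw [Finset.filter_filter]
    apply Finset.filter_congr
    intro p _
    constructor
    · exact fun h => h.2
    · exact fun h => ⟨asymm h, h⟩
  have h2 : ∑ p ∈ ((univ ×ˢ univ).filter (fun p : Fin r × Fin r => ¬ p.1 < p.2)).filter
      (fun p : Fin r × Fin r => ¬ p.2 < p.1), g p.1 p.2 = 0 := by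
    refine Finset.sum_eq_zero fun p hp => ?_
    simp only [Finset.mem_filter] at hp
    have heq : p.1 = p.2 := le_antisymm (not_lt.mp hp.2) (not_lt.mp hp.1.2)
    rw [heq, hdiag]
  have hswap : ∑ p ∈ (univ ×ˢ univ).filter (fun p : Fin r × Fin r => p.2 < p.1), g p.1 p.2
      = ∑ p ∈ (univ ×ˢ univ).filter (fun p : Fin r × Fin r => p.1 < p.2), g p.1 p.2 := by
    refine Finset.sum_nbij' (fun p => Prod.swap p) (fun p => Prod.swap p) ?_ ?_ ?_ ?_ ?_
    · intro p hp
      simp only [Finset.mem_filter, Finset.mem_product, Finset.mem_univ, true_and,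
        Prod.fst_swap, Prod.snd_swap] at hp ⊢
      exact hp
    · intro p hp
      simp only [Finset.mem_filter, Finset.mem_product, Finset.mem_univ, true_and,
        Prod.fst_swap, Prod.snd_swap] at hp ⊢
      exact hp
    · intro p _; simp
    · intro p _; simp
    · intro p _
      simp only [Prod.fst_swap, Prod.snd_swap]
      exact hsymm p.1 p.2
  rw [← Finset.sum_filter_add_sum_filter_not
    ((univ ×ˢ univ).filter (fun p : Fin r × Fin r => ¬ p.1 < p.2))
    (fun p : Fin r × Fin r => p.2 < p.1), h1, h2, hswap]
  omega

theorem domNum_ge_sum_dist {V : Type*} [Fintype V]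
    (G : SimpleGraph V) (hG : G.Connected) (r : ℕ) (hr : 3 ≤ r) (x : Fin r → V) :
    r * (r - 1) * domNum G ≥
      ∑ p ∈ (univ ×ˢ univ).filter (fun p : Fin r × Fin r => p.1 < p.2),
        G.dist (x p.1) (x p.2) := by
  classical
  have hnset : {n | ∃ S : Finset V, DomSet G S ∧ S.card = n}.Nonempty :=
    ⟨(univ : Finset V).card, univ, fun v => Or.inl (mem_univ v), rfl⟩
  obtain ⟨S, hS, hScard⟩ : ∃ S : Finset V, DomSet G S ∧ S.card = domNum G :=
    Nat.sInf_mem hnset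
  have : Nonempty V := hG.nonempty
  obtain ⟨v⟩ := this
  have hSne : S.Nonempty := by
    rcases hS v with h | ⟨u, hu, _⟩
    exacts [⟨v, h⟩, ⟨u, hu⟩]
  have hK : 1 ≤ S.card := Finset.card_pos.mpr hSne
  obtain ⟨T, hTS, hTcard, w, hcover, hmemT, hchain⟩ :=
    enum_exists hG hS S.card hK le_rfl
  have hTeqS : T = S := Finset.eq_of_subset_of_card_le hTS (le_of_eq hTcard.symm)
  subst hTeqS
  -- choose dominators
  have hu : ∀ i, ∃ m : Fin T.card, G.dist (x i) (w m) ≤ 1 := by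
    intro i
    rcases hS (x i) with h | ⟨u, huS, hadj⟩
    · obtain ⟨m, hm⟩ := hcover (x i) h
      exact ⟨m, by rw [← hm, SimpleGraph.dist_self]; omega⟩
    · obtain ⟨m, hm⟩ := hcover u huS
      refine ⟨m, ?_⟩
      rw [← hm, SimpleGraph.dist_comm]
      exact le_of_eq (SimpleGraph.dist_eq_one_iff_adj.mpr hadj)
  choose mf hmf using hu
  have hpt : ∀ i j, G.dist (x i) (x j) ≤ G.dist (w (mf i)) (w (mf j)) +
      (if i = j then 0 else 2) := by
    intro i j
    by_cases h : i = j
    · subst h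
      simp [SimpleGraph.dist_self]
    · simp only [h, if_false]
      calc G.dist (x i) (x j) ≤ G.dist (x i) (w (mf i)) + G.dist (w (mf i)) (x j) :=
            hG.dist_triangle
        _ ≤ G.dist (x i) (w (mf i)) + (G.dist (w (mf i)) (w (mf j)) + G.dist (w (mf j)) (x j)) :=
            by have := hG.dist_triangle (u := w (mf i)) (v := w (mf j)) (w := x j); omega
        _ ≤ 1 + (G.dist (w (mf i)) (w (mf j)) + 1) := by
            have h1 := hmf i
            have h2 := hmf j
            have h3 : G.dist (w (mf j)) (x j) ≤ 1 := by
              rwa [SimpleGraph.dist_comm]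
            omega
        _ = G.dist (w (mf i)) (w (mf j)) + 2 := by omega
  -- sum over ordered pairs
  have hsum1 : ∑ i : Fin r, ∑ j : Fin r, G.dist (x i) (x j) ≤
      (∑ i : Fin r, ∑ j : Fin r, G.dist (w (mf i)) (w (mf j))) +
      ∑ i : Fin r, ∑ j : Fin r, (if i = j then 0 else 2) := by
    rw [← Finset.sum_add_distrib]
    refine Finset.sum_le_sum fun i _ => ?_
    rw [← Finset.sum_add_distrib]
    exact Finset.sum_le_sum fun j _ => hpt i j
  have hdiagcount : (∑ i : Fin r, ∑ j : Fin r, (if i = j then 0 else 2)) = 2 * (r * (r - 1)) := by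
    have hinner : ∀ i : Fin r, (∑ j : Fin r, (if i = j then 0 else 2)) = 2 * (r - 1) := by
      intro i
      rw [Finset.sum_ite, Finset.sum_const, Finset.sum_const]
      have h1 : (univ.filter (fun j : Fin r => i = j)).card = 1 := by
        rw [Finset.filter_eq]
        simp
      have h2 : (univ.filter (fun j : Fin r => ¬ i = j)).card = r - 1 := by
        have := Finset.card_filter_add_card_filter_not
          (s := (univ : Finset (Fin r))) (p := fun j : Fin r => i = j)
        simp only [Finset.card_univ, Fintype.card_fin] at this
        omega
      simp [h1, h2, mul_comm]
    rw [Finset.sum_congr rfl fun i _ => hinner i, Finset.sum_const]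
    simp [Finset.card_univ, mul_comm, mul_assoc, mul_left_comm]
  have hbound := sum_bound hG r hr T.card hK w hchain mf
  have hdouble := double_sum (fun i j => G.dist (x i) (x j))
    (fun i j => SimpleGraph.dist_comm) (fun i => SimpleGraph.dist_self)
  rw [ge_iff_le]
  have hKd : T.card = domNum G := hScard
  -- put everything together
  have hfin : 2 * (r * (r - 1)) * (T.card - 1) + 2 * (r * (r - 1)) =
      2 * (r * (r - 1)) * T.card := by
    obtain ⟨m, hm⟩ : ∃ m, T.card = m + 1 := ⟨T.card - 1, by omega⟩
    rw [hm]
    simp only [Nat.add_sub_cancel]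
    ring
  have hchain2 : ∑ i : Fin r, ∑ j : Fin r, G.dist (x i) (x j) ≤
      2 * (r * (r - 1)) * T.card := by
    calc ∑ i : Fin r, ∑ j : Fin r, G.dist (x i) (x j) ≤
        (∑ i : Fin r, ∑ j : Fin r, G.dist (w (mf i)) (w (mf j))) +
          ∑ i : Fin r, ∑ j : Fin r, (if i = j then 0 else 2) := hsum1
      _ ≤ 2 * (r * (r - 1)) * (T.card - 1) + 2 * (r * (r - 1)) := by
          rw [hdiagcount]
          exact Nat.add_le_add_right hbound _
      _ = 2 * (r * (r - 1)) * T.card := hfin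
  have h2M : 2 * (r * (r - 1)) * T.card = 2 * (r * (r - 1) * domNum G) := by
    rw [hKd]; ring
  have hfinal2 : 2 * (∑ p ∈ (univ ×ˢ univ).filter (fun p : Fin r × Fin r => p.1 < p.2),
      G.dist (x p.1) (x p.2)) ≤ 2 * (r * (r - 1) * domNum G) := by
    calc 2 * (∑ p ∈ (univ ×ˢ univ).filter (fun p : Fin r × Fin r => p.1 < p.2),
        G.dist (x p.1) (x p.2)) = ∑ i : Fin r, ∑ j : Fin r, G.dist (x i) (x j) := hdouble
      _ ≤ 2 * (r * (r - 1)) * T.card := hchain2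
      _ = 2 * (r * (r - 1) * domNum G) := h2M
  omega
end

section
/- For any finite connected simple graph G on n ≥ 2 vertices, γ(G) ≥ W(G)/(n(n−1)), where W(G) is the Wiener index of G; equivalently γ(G) ≥ μ(G), the average distance of G. -/
open SimpleGraph Finset

/-- Auxiliary graph on a finset `S`: two vertices of `S` are adjacent iff their
distance in `G` is at most 3. -/
def aux3 {V : Type*} (G : SimpleGraph V) (S : Finset V) : SimpleGraph V where
  Adj a b := a ≠ b ∧ a ∈ S ∧ b ∈ S ∧ G.dist a b ≤ 3
  symm := by
    constructor
    intro a b h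
    exact ⟨h.1.symm, h.2.2.1, h.2.1, by rw [SimpleGraph.dist_comm]; exact h.2.2.2⟩
  loopless := by constructor; intro a h; exact h.1 rfl

/-- In a connected (via `aux3`) finset of size ≥ 2 there is a non-cut vertex. -/
lemma aux3_noncut {V : Type*} [DecidableEq V] (G : SimpleGraph V) (S : Finset V)
    (hS : 2 ≤ S.card)
    (hconn : ∀ x ∈ S, ∀ y ∈ S, (aux3 G S).Reachable x y) :
    ∃ x ∈ S, ∃ t ∈ S.erase x, G.dist x t ≤ 3 ∧
      ∀ a ∈ S.erase x, ∀ b ∈ S.erase x, (aux3 G (S.erase x)).Reachable a b := by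
  obtain ⟨r, hr⟩ := Finset.card_pos.mp (by omega : 0 < S.card)
  set H := aux3 G S with hH
  obtain ⟨x, hx, hmax⟩ := S.exists_max_image (fun y => H.dist r y) ⟨r, hr⟩
  obtain ⟨y, hy, hyr⟩ := Finset.exists_mem_ne (s := S) (by omega) r
  have hry : 1 ≤ H.dist r y :=
    (hconn r hr y hy).pos_dist_of_ne (Ne.symm hyr)
  have hx1 : 1 ≤ H.dist r x := le_trans hry (hmax y hy)
  have hxr : x ≠ r := by
    intro h; subst h
    rw [SimpleGraph.dist_self] at hx1; omega
  -- find a neighbor t of x in the auxiliary graph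
  obtain ⟨p⟩ := hconn x hx r hr
  obtain ⟨t, hadj⟩ : ∃ t, H.Adj x t := by
    cases p with
    | nil => exact absurd rfl hxr
    | cons h q => exact ⟨_, h⟩
  have htS : t ∈ S.erase x := Finset.mem_erase.mpr ⟨(hadj.ne).symm, hadj.2.2.1⟩
  refine ⟨x, hx, t, htS, hadj.2.2.2, ?_⟩
  -- connectivity of the erased set: every a reaches r
  have main : ∀ a ∈ S.erase x, (aux3 G (S.erase x)).Reachable r a := by
    intro a ha
    have haS : a ∈ S := (Finset.mem_erase.mp ha).2
    have hax : a ≠ x := (Finset.mem_erase.mp ha).1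
    obtain ⟨p, hp⟩ := (hconn r hr a haS).exists_walk_length_eq_dist
    have hxp : x ∉ p.support := by
      intro hxp
      have hsplit := p.take_spec hxp
      have hlen := congrArg SimpleGraph.Walk.length hsplit
      rw [SimpleGraph.Walk.length_append] at hlen
      have h1 : H.dist r x ≤ (p.takeUntil x hxp).length := SimpleGraph.dist_le _
      have h2 : H.dist x a ≤ (p.dropUntil x hxp).length := SimpleGraph.dist_le _
      have h3 : 1 ≤ H.dist x a :=
        SimpleGraph.Reachable.pos_dist_of_ne ⟨p.dropUntil x hxp⟩ (Ne.symm hax)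
      have h4 : H.dist r a ≤ H.dist r x := hmax a haS
      omega
    have hedges : ∀ e ∈ p.edges, e ∈ (aux3 G (S.erase x)).edgeSet := by
      intro e he
      induction e using Sym2.ind with
      | _ u v =>
        have huv : H.Adj u v := p.edges_subset_edgeSet he
        have hu : u ∈ p.support := p.fst_mem_support_of_mem_edges he
        have hv : v ∈ p.support := p.snd_mem_support_of_mem_edges he
        have hux : u ≠ x := fun h => hxp (h ▸ hu)
        have hvx : v ≠ x := fun h => hxp (h ▸ hv)
        exact ⟨huv.1, Finset.mem_erase.mpr ⟨hux, huv.2.1⟩,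
          Finset.mem_erase.mpr ⟨hvx, huv.2.2.1⟩, huv.2.2.2⟩
    exact ⟨p.transfer _ hedges⟩
  intro a ha b hb
  exact (main a ha).symm.trans (main b hb)

/-- Key lemma: if all values of `c` lie in a set `S` of size `k` which is connected
in the `aux3` sense, then the total pairwise distance between images is controlled. -/
lemma key_lemma {V : Type*} [Fintype V] [DecidableEq V] (G : SimpleGraph V)
    (hG : G.Connected) :
    ∀ (k : ℕ) (S : Finset V) (c : V → V), S.card = k →
      (∀ v, c v ∈ S) →
      (∀ x ∈ S, ∀ y ∈ S, (aux3 G S).Reachable x y) →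
      2 * ∑ u : V, ∑ v : V, G.dist (c u) (c v) ≤ 3 * (k - 1) * (Fintype.card V) ^ 2 := by
  intro k
  induction k using Nat.strong_induction_on with
  | _ k ih =>
    intro S c hcard hcS hconn
    by_cases hk : k ≤ 1
    · have hz : ∀ u v : V, G.dist (c u) (c v) = 0 := by
        intro u v
        have : c u = c v := Finset.card_le_one.mp (hcard ▸ hk) _ (hcS u) _ (hcS v)
        rw [this, SimpleGraph.dist_self]
      have : ∑ u : V, ∑ v : V, G.dist (c u) (c v) = 0 := by
        simp [hz]
      simp [this]
    · push_neg at hk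
      obtain ⟨x, hx, t, ht, hdxt, hconn'⟩ :=
        aux3_noncut G S (by omega : 2 ≤ S.card) hconn
      set c' : V → V := fun v => if c v = x then t else c v with hc'
      have hc'S : ∀ v, c' v ∈ S.erase x := by
        intro v
        by_cases h : c v = x
        · simp only [hc', if_pos h]; exact ht
        · simp only [hc', if_neg h]
          exact Finset.mem_erase.mpr ⟨h, hcS v⟩
      have hcard' : (S.erase x).card = k - 1 := by
        rw [Finset.card_erase_of_mem hx, hcard]
      have IH := ih (k - 1) (by omega) (S.erase x) c' hcard' hc'S hconn'
      set n := Fintype.card V with hn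
      -- pointwise bound
      have hpt : ∀ u v : V, G.dist (c u) (c v) ≤ G.dist (c' u) (c' v)
          + (if c u = x then 1 else 0) * ((if c v = x then 0 else 1) * 3)
          + (if c v = x then 1 else 0) * ((if c u = x then 0 else 1) * 3) := by
        intro u v
        by_cases hu : c u = x <;> by_cases hv : c v = x
        · have e1 : c' u = t := by simp [hc', hu]
          have e2 : c' v = t := by simp [hc', hv]
          have : G.dist (c u) (c v) = 0 := by rw [hu, hv, SimpleGraph.dist_self]
          rw [this]
          exact Nat.zero_le _
        · have e1 : c' u = t := by simp [hc', hu]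
          have e2 : c' v = c v := by simp [hc', hv]
          have htri : G.dist x (c v) ≤ G.dist x t + G.dist t (c v) :=
            hG.dist_triangle
          rw [e1, e2, hu, if_pos rfl, if_pos rfl, if_neg hv, if_neg hv]
          omega
        · have e1 : c' u = c u := by simp [hc', hu]
          have e2 : c' v = t := by simp [hc', hv]
          have htri : G.dist (c u) x ≤ G.dist (c u) t + G.dist t x :=
            hG.dist_triangle
          have hcm : G.dist t x = G.dist x t := SimpleGraph.dist_comm
          rw [e1, e2, hv, if_pos rfl, if_pos rfl, if_neg hu, if_neg hu]
          omega
        · have e1 : c' u = c u := by simp [hc', hu]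
          have e2 : c' v = c v := by simp [hc', hv]
          rw [e1, e2, if_neg hu, if_neg hv]
          omega
      -- counting
      set m := (Finset.univ.filter (fun v => c v = x)).card with hm
      have hmn : m ≤ n := by
        rw [hm, hn]
        exact le_trans (Finset.card_filter_le _ _) (le_of_eq Finset.card_univ)
      have hsum1 : ∑ u : V, (if c u = x then (1:ℕ) else 0) = m := by
        rw [hm, Finset.card_filter]
      have hsum0 : ∑ u : V, (if c u = x then (0:ℕ) else 1) = n - m := by
        have hc := Finset.card_filter_add_card_filter_not
          (s := (Finset.univ : Finset V)) (p := fun v => c v = x)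
        have h2 : ∑ u : V, (if c u = x then (0:ℕ) else 1)
            = (Finset.univ.filter (fun v => ¬ (c v = x))).card := by
          rw [Finset.card_filter]
          apply Finset.sum_congr rfl
          intro u _
          by_cases h : c u = x <;> simp [h]
        rw [h2]
        rw [Finset.card_univ] at hc
        omega
      have e1 : ∑ u : V, ∑ v : V,
          ((if c u = x then (1:ℕ) else 0) * ((if c v = x then (0:ℕ) else 1) * 3))
          = m * ((n - m) * 3) := by
        have inner : ∑ v : V, ((if c v = x then (0:ℕ) else 1) * 3) = (n - m) * 3 := by
          rw [← Finset.sum_mul, hsum0]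
        calc ∑ u : V, ∑ v : V,
            ((if c u = x then (1:ℕ) else 0) * ((if c v = x then (0:ℕ) else 1) * 3))
            = ∑ u : V, ((if c u = x then (1:ℕ) else 0) * ((n - m) * 3)) := by
              refine Finset.sum_congr rfl fun u _ => ?_
              rw [← Finset.mul_sum, inner]
          _ = m * ((n - m) * 3) := by rw [← Finset.sum_mul, hsum1]
      have e2 : ∑ u : V, ∑ v : V,
          ((if c v = x then (1:ℕ) else 0) * ((if c u = x then (0:ℕ) else 1) * 3))
          = m * ((n - m) * 3) := by
        calc ∑ u : V, ∑ v : V,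
            ((if c v = x then (1:ℕ) else 0) * ((if c u = x then (0:ℕ) else 1) * 3))
            = ∑ u : V, (m * ((if c u = x then (0:ℕ) else 1) * 3)) := by
              refine Finset.sum_congr rfl fun u _ => ?_
              rw [← Finset.sum_mul, hsum1]
          _ = m * ∑ u : V, ((if c u = x then (0:ℕ) else 1) * 3) := by
              rw [Finset.mul_sum]
          _ = m * ((n - m) * 3) := by rw [← Finset.sum_mul, hsum0]
      have hQ : ∑ u : V, ∑ v : V, G.dist (c u) (c v)
          ≤ (∑ u : V, ∑ v : V, G.dist (c' u) (c' v)) + m * ((n - m) * 3) + m * ((n - m) * 3) := by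
        calc ∑ u : V, ∑ v : V, G.dist (c u) (c v)
            ≤ ∑ u : V, ∑ v : V, (G.dist (c' u) (c' v)
              + (if c u = x then 1 else 0) * ((if c v = x then 0 else 1) * 3)
              + (if c v = x then 1 else 0) * ((if c u = x then 0 else 1) * 3)) := by
              apply Finset.sum_le_sum; intro u _
              apply Finset.sum_le_sum; intro v _
              exact hpt u v
          _ = _ := by
              simp only [Finset.sum_add_distrib]
              rw [e1, e2]
      -- arithmetic conclusion
      have hab : 4 * (m * (n - m)) ≤ n ^ 2 := by
        have hnm : m + (n - m) = n := by omega
        have hz : (4 * (m * (n - m)) : ℤ) ≤ ((m : ℤ) + ((n - m : ℕ) : ℤ)) ^ 2 := by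
          nlinarith [sq_nonneg ((m : ℤ) - ((n - m : ℕ) : ℤ))]
        have : ((m : ℤ) + ((n - m : ℕ) : ℤ)) = (n : ℤ) := by omega
        rw [this] at hz
        exact_mod_cast hz
      obtain ⟨j, hj⟩ : ∃ j, k - 1 = j + 1 := ⟨k - 2, by omega⟩
      have hj2 : k - 1 - 1 = j := by omega
      rw [hj2] at IH
      have h4 : 3 * (k - 1) * n ^ 2 = 3 * j * n ^ 2 + 3 * n ^ 2 := by
        rw [hj]; ring
      rw [h4]
      have h1 : 2 * ∑ u : V, ∑ v : V, G.dist (c u) (c v)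
          ≤ 2 * (∑ u : V, ∑ v : V, G.dist (c' u) (c' v)) + 12 * (m * (n - m)) := by
        nlinarith [hQ]
      linarith [IH, hab, h1]

/-- A walk from outside a set to inside it must cross an edge of the boundary. -/
lemma walk_cross {V : Type*} (G : SimpleGraph V) (A : Set V) :
    ∀ (u x : V) (p : G.Walk u x), u ∉ A → x ∈ A →
      ∃ a b : V, G.Adj a b ∧ a ∉ A ∧ b ∈ A := by
  intro u x p
  induction p with
  | nil => intro h hx; exact absurd hx h
  | @cons u' v' w' h q ihq =>
    intro hu hx
    by_cases hmem : v' ∈ A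
    · exact ⟨u', v', h, hu, hmem⟩
    · exact ihq hmem hx

/-- The auxiliary graph on a dominating set of a connected graph is connected. -/
lemma dom_aux3_conn {V : Type*} [Fintype V] [DecidableEq V] (G : SimpleGraph V)
    (hG : G.Connected) (D : Finset V) (hD : DomSet G D) :
    ∀ x ∈ D, ∀ y ∈ D, (aux3 G D).Reachable x y := by
  intro x hx y hy
  classical
  set T := D.filter (fun z => (aux3 G D).Reachable x z) with hT
  have hxT : x ∈ T := Finset.mem_filter.mpr ⟨hx, Reachable.refl x⟩
  suffices hall : ∀ z ∈ D, z ∈ T by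
    exact (Finset.mem_filter.mp (hall y hy)).2
  by_contra hcon
  push_neg at hcon
  obtain ⟨y0, hy0D, hy0T⟩ := hcon
  set A : Set V := {v | ∃ t ∈ T, G.dist v t ≤ 1} with hA
  have hclosed : ∀ z ∈ D, z ∉ T → ∀ t ∈ T, ¬ (G.dist z t ≤ 3) := by
    intro z hz hzT t htT hle
    apply hzT
    refine Finset.mem_filter.mpr ⟨hz, ?_⟩
    have htD : t ∈ D := (Finset.mem_filter.mp htT).1
    have hrt : (aux3 G D).Reachable x t := (Finset.mem_filter.mp htT).2
    have hadj : (aux3 G D).Adj t z :=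
      ⟨fun h => hzT (h ▸ htT), htD, hz, by rw [SimpleGraph.dist_comm]; exact hle⟩
    exact hrt.trans hadj.reachable
  have hdomin : ∀ a : V, ∃ z ∈ D, G.dist a z ≤ 1 := by
    intro a
    rcases hD a with h | ⟨u, hu, hadj'⟩
    · exact ⟨a, h, by simp [SimpleGraph.dist_self]⟩
    · exact ⟨u, hu, le_of_eq (SimpleGraph.dist_eq_one_iff_adj.mpr hadj'.symm)⟩
  by_cases hAall : ∀ v, v ∈ A
  · obtain ⟨t, htT, hle⟩ := hAall y0
    exact hclosed y0 hy0D hy0T t htT (by omega)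
  · push_neg at hAall
    obtain ⟨b, hb⟩ := hAall
    have hxA : x ∈ A := ⟨x, hxT, by simp [SimpleGraph.dist_self]⟩
    obtain ⟨a1, b1, hadj, ha1, hb1⟩ :=
      walk_cross G A b x (hG.preconnected b x).some hb hxA
    obtain ⟨t1, ht1T, ht1le⟩ := hb1
    obtain ⟨z, hzD, hz1⟩ := hdomin a1
    have hzT : z ∉ T := fun hzT => ha1 ⟨z, hzT, hz1⟩
    apply hclosed z hzD hzT t1 ht1T
    have htr1 : G.dist z t1 ≤ G.dist z a1 + G.dist a1 t1 := hG.dist_triangle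
    have htr2 : G.dist a1 t1 ≤ G.dist a1 b1 + G.dist b1 t1 := hG.dist_triangle
    have hcm : G.dist z a1 = G.dist a1 z := SimpleGraph.dist_comm
    have hab1 : G.dist a1 b1 = 1 := SimpleGraph.dist_eq_one_iff_adj.mpr hadj
    omega

/-- `γ(G) ≥ W(G)/(n(n-1))`, with the Wiener index here expressed as the sum of
distances over ordered pairs (which equals `2·W(G)`). -/
theorem domNum_ge_average_distance {V : Type*} [Fintype V]
    (G : SimpleGraph V) (hG : G.Connected) (h2 : 2 ≤ Fintype.card V) :
    2 * (Fintype.card V * (Fintype.card V - 1)) * domNum G ≥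
      ∑ u : V, ∑ v : V, G.dist u v := by
  classical
  set n := Fintype.card V with hn
  have hnempty : Nonempty V := Fintype.card_pos_iff.mp (by omega)
  have hsetne : {k | ∃ S : Finset V, DomSet G S ∧ S.card = k}.Nonempty :=
    ⟨(Finset.univ : Finset V).card, Finset.univ, fun v => Or.inl (Finset.mem_univ v), rfl⟩
  have hmem : domNum G ∈ {k | ∃ S : Finset V, DomSet G S ∧ S.card = k} :=
    Nat.sInf_mem hsetne
  obtain ⟨D, hD, hDcard⟩ := hmem
  have hγ1 : 1 ≤ domNum G := by
    by_contra h
    push_neg at h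
    have h0 : domNum G = 0 := by omega
    rw [h0] at hDcard
    have hDe : D = ∅ := Finset.card_eq_zero.mp hDcard
    obtain ⟨v⟩ := hnempty
    rcases hD v with hv | ⟨u, hu, _⟩
    · rw [hDe] at hv; exact absurd hv (Finset.notMem_empty v)
    · rw [hDe] at hu; exact absurd hu (Finset.notMem_empty u)
  -- the inner bound sum
  have hinner : ∀ u : V, ∑ v : V, (if u = v then (0:ℕ) else 2) = 2 * (n - 1) := by
    intro u
    rw [← Finset.sum_filter_add_sum_filter_not Finset.univ (fun v => u = v)]
    have hf1 : Finset.univ.filter (fun v => u = v) = {u} := by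
      ext w; simp [eq_comm]
    have hf2 : Finset.univ.filter (fun v => ¬ u = v) = Finset.univ.erase u := by
      ext w; simp [eq_comm, Finset.mem_erase]
    rw [hf1, hf2]
    have : ∑ v ∈ ({u} : Finset V), (if u = v then (0:ℕ) else 2) = 0 := by simp
    rw [this]
    have heach : ∀ v ∈ Finset.univ.erase u, (if u = v then (0:ℕ) else 2) = 2 := by
      intro v hv
      have := (Finset.mem_erase.mp hv).1
      simp [Ne.symm this]
    rw [Finset.sum_congr rfl heach, Finset.sum_const,
      Finset.card_erase_of_mem (Finset.mem_univ u), Finset.card_univ]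
    simp [hn, mul_comm]
  rw [ge_iff_le]
  by_cases hn4 : 4 ≤ n
  · -- main case
    have hcex : ∀ v : V, ∃ u, u ∈ D ∧ G.dist v u ≤ 1 := by
      intro v
      rcases hD v with h | ⟨u, hu, hadj⟩
      · exact ⟨v, h, by simp [SimpleGraph.dist_self]⟩
      · exact ⟨u, hu, le_of_eq (SimpleGraph.dist_eq_one_iff_adj.mpr hadj.symm)⟩
    choose c hcD hc1 using hcex
    have hconnD := dom_aux3_conn G hG D hD
    have hkey := key_lemma G hG (domNum G) D c hDcard hcD hconnD
    have hpt : ∀ u v : V, G.dist u v ≤ (if u = v then 0 else 2) + G.dist (c u) (c v) := by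
      intro u v
      by_cases h : u = v
      · subst h
        simp [SimpleGraph.dist_self]
      · have htr1 : G.dist u v ≤ G.dist u (c u) + G.dist (c u) v := hG.dist_triangle
        have htr2 : G.dist (c u) v ≤ G.dist (c u) (c v) + G.dist (c v) v := hG.dist_triangle
        have h1 : G.dist u (c u) ≤ 1 := hc1 u
        have h2 : G.dist (c v) v ≤ 1 := by
          rw [SimpleGraph.dist_comm]; exact hc1 v
        rw [if_neg h]
        omega
    have hsum : ∑ u : V, ∑ v : V, G.dist u v
        ≤ n * (2 * (n - 1)) + ∑ u : V, ∑ v : V, G.dist (c u) (c v) := by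
      calc ∑ u : V, ∑ v : V, G.dist u v
          ≤ ∑ u : V, ∑ v : V, ((if u = v then 0 else 2) + G.dist (c u) (c v)) := by
            apply Finset.sum_le_sum; intro u _
            apply Finset.sum_le_sum; intro v _
            exact hpt u v
        _ = (∑ u : V, ∑ v : V, (if u = v then (0:ℕ) else 2))
            + ∑ u : V, ∑ v : V, G.dist (c u) (c v) := by
            simp only [Finset.sum_add_distrib]
        _ = n * (2 * (n - 1)) + ∑ u : V, ∑ v : V, G.dist (c u) (c v) := by
            congr 1
            rw [Finset.sum_congr rfl (fun u _ => hinner u), Finset.sum_const, Finset.card_univ]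
            simp [hn, mul_comm]
    -- final arithmetic
    obtain ⟨g, hg⟩ : ∃ g, domNum G = g + 1 := ⟨domNum G - 1, by omega⟩
    obtain ⟨p, hp, hp3⟩ : ∃ p, n = p + 1 ∧ 3 ≤ p := ⟨n - 1, by omega, by omega⟩
    have hfin : 2 * (n * (2 * (n - 1))) + 3 * (domNum G - 1) * n ^ 2
        ≤ 2 * (2 * (n * (n - 1)) * domNum G) := by
      have hg1 : domNum G - 1 = g := by omega
      have hn1 : n - 1 = p := by omega
      rw [hg1, hn1, hg, hp]
      have hint : 3 * (p + 1) ≤ 4 * p := by omega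
      nlinarith [mul_le_mul_of_nonneg_right hint (Nat.zero_le (g * (p + 1)))]
    linarith [hsum, hkey, hfin]
  · -- small case: n ∈ {2, 3}
    have hd2 : ∀ u v : V, G.dist u v ≤ (if u = v then 0 else 2) := by
      intro u v
      by_cases h : u = v
      · subst h; simp [SimpleGraph.dist_self]
      · obtain ⟨q, hq, hql⟩ := hG.exists_path_of_dist u v
        have := hq.length_lt
        rw [if_neg h]
        omega
    have hsum : ∑ u : V, ∑ v : V, G.dist u v ≤ n * (2 * (n - 1)) := by
      calc ∑ u : V, ∑ v : V, G.dist u v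
          ≤ ∑ u : V, ∑ v : V, (if u = v then (0:ℕ) else 2) := by
            apply Finset.sum_le_sum; intro u _
            apply Finset.sum_le_sum; intro v _
            exact hd2 u v
        _ = n * (2 * (n - 1)) := by
            rw [Finset.sum_congr rfl (fun u _ => hinner u), Finset.sum_const, Finset.card_univ]
            simp [hn, mul_comm]
    have : n * (2 * (n - 1)) ≤ 2 * (n * (n - 1)) * domNum G := by
      have h1 : n * (2 * (n - 1)) = 2 * (n * (n - 1)) := by ring
      rw [h1]
      exact Nat.le_mul_of_pos_right _ (by omega)
    exact le_trans hsum this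
end

section
/- For any finite connected simple graph G, γ(G) ≥ (ecc_G(B) + 1)/2, where B is the boundary of G. -/
open SimpleGraph Finset

/-- Distance from a vertex to a set of vertices. -/
noncomputable def distToSet {V : Type*} (G : SimpleGraph V) (v : V) (S : Finset V) : ℕ :=
  sInf {d | ∃ x ∈ S, G.dist v x = d}

/-- Eccentricity of a set of vertices in a finite graph. -/
noncomputable def eccSet {V : Type*} [Fintype V] (G : SimpleGraph V) (S : Finset V) : ℕ :=
  univ.sup (fun v => distToSet G v S)

/-- Eccentricity of a vertex. -/
noncomputable def eccVert {V : Type*} [Fintype V] (G : SimpleGraph V) (v : V) : ℕ :=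
  univ.sup (fun u => G.dist v u)

/-- The boundary of `G`: vertices of eccentricity equal to the diameter. -/
noncomputable def boundary {V : Type*} [Fintype V] (G : SimpleGraph V) : Finset V :=
  univ.filter (fun v => eccVert G v = G.diam)

/- ============ auxiliary lemmas ============ -/

section Aux

variable {V : Type*} {G : SimpleGraph V}

lemma aux_dist_getVert_le (hconn : G.Connected) {u v : V} (W : G.Walk u v) :
    ∀ i : ℕ, G.dist u (W.getVert i) ≤ i := by
  induction W with
  | nil =>
    intro i
    rw [SimpleGraph.Walk.getVert_of_length_le _ (by simp)]
    simp [SimpleGraph.dist_self]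
  | @cons a b c h p ih =>
    intro i
    cases i with
    | zero => simp [SimpleGraph.dist_self]
    | succ n =>
      rw [SimpleGraph.Walk.getVert_cons_succ]
      calc G.dist a (p.getVert n) ≤ G.dist a b + G.dist b (p.getVert n) :=
            hconn.dist_triangle
        _ ≤ 1 + n := by
            have h1 : G.dist a b = 1 := SimpleGraph.dist_eq_one_iff_adj.mpr h
            have h2 := ih n
            omega
        _ = n + 1 := by omega

lemma aux_getVert_dist_le {u v : V} (W : G.Walk u v) :
    ∀ i : ℕ, G.dist (W.getVert i) v ≤ W.length - i := by
  induction W with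
  | nil =>
    intro i
    rw [SimpleGraph.Walk.getVert_of_length_le _ (by simp)]
    simp [SimpleGraph.dist_self]
  | @cons a b c h p ih =>
    intro i
    cases i with
    | zero =>
      rw [SimpleGraph.Walk.getVert_zero]
      have := SimpleGraph.dist_le (SimpleGraph.Walk.cons h p)
      simpa using this
    | succ n =>
      rw [SimpleGraph.Walk.getVert_cons_succ]
      have := ih n
      have hl : (SimpleGraph.Walk.cons h p).length = p.length + 1 := by simp
      omega

/-- On a geodesic from `u` to `v`, for every `i ≤ dist u v` there is a vertex at
distance `i` from `u` and `dist u v - i` from `v`. -/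
lemma aux_chain (hconn : G.Connected) (u v : V) (i : ℕ) (hi : i ≤ G.dist u v) :
    ∃ x : V, G.dist u x = i ∧ G.dist x v + i = G.dist u v := by
  obtain ⟨W, hW⟩ := hconn.exists_walk_length_eq_dist u v
  refine ⟨W.getVert i, ?_⟩
  have h1 := aux_dist_getVert_le hconn W i
  have h2 := aux_getVert_dist_le W i
  have h3 : G.dist u v ≤ G.dist u (W.getVert i) + G.dist (W.getVert i) v :=
    hconn.dist_triangle
  rw [hW] at h2
  omega

/-- Arithmetic: the cross-collision contradiction. -/
lemma aux_cross_arith {k m diam t jmin j0 i j d1 : ℕ}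
    (ht : diam + t = k + m)
    (hjmin : (k % 3 = m % 3 ∧ jmin = t / 2 + 2) ∨ (¬ (k % 3 = m % 3) ∧ jmin = t / 2 + 3))
    (hj0ge : jmin ≤ j0)
    (hia : i % 3 = k % 3) (hjc : j % 3 = m % 3) (hjj0 : j0 ≤ j)
    (hd : d1 ≤ 2)
    (hij1 : j ≤ i + d1) (hij2 : i ≤ j + d1)
    (ht3 : diam + i + j ≤ k + m + d1) : False := by
  rcases hjmin with ⟨hac, hjm⟩ | ⟨hac, hjm⟩ <;> omega

set_option maxHeartbeats 1000000 in
/-- Arithmetic: the final count, case of equal residues. -/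
lemma aux_final_eq {k m diam t a c jmin j0 nI nJ nB g : ℕ}
    (h1 : 1 ≤ k) (h2 : k ≤ m) (h3 : m + 1 ≤ diam) (h4 : diam + t = k + m)
    (ha : a = k % 3) (hc : c = m % 3)
    (hjmin : jmin = t / 2 + 2)
    (hj01 : jmin ≤ j0) (hj02 : j0 ≤ jmin + 2) (hj03 : j0 % 3 = c)
    (hnI : nI = (k - a) / 3 + 1)
    (hnJ1 : j0 ≤ m → nJ = (m - j0) / 3 + 1) (hnJ2 : m < j0 → nJ = 0)
    (hnB : nB = (diam - diam % 3) / 3 + 1)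
    (hg1 : nI + nJ ≤ g) (hg2 : nB ≤ g) (hac : a = c) : k + 1 ≤ 2 * g := by
  omega

set_option maxHeartbeats 4000000 in
/-- Arithmetic: the final count, case of distinct residues. -/
lemma aux_final_ne {k m diam t a c jmin j0 nI nJ nB g : ℕ}
    (h1 : 1 ≤ k) (h2 : k ≤ m) (h3 : m + 1 ≤ diam) (h4 : diam + t = k + m)
    (ha : a = k % 3) (hc : c = m % 3)
    (hjmin : jmin = t / 2 + 3)
    (hj01 : jmin ≤ j0) (hj02 : j0 ≤ jmin + 2) (hj03 : j0 % 3 = c)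
    (hnI : nI = (k - a) / 3 + 1)
    (hnJ1 : j0 ≤ m → nJ = (m - j0) / 3 + 1) (hnJ2 : m < j0 → nJ = 0)
    (hnB : nB = (diam - diam % 3) / 3 + 1)
    (hg1 : nI + nJ ≤ g) (hg2 : nB ≤ g) (hac : a ≠ c) : k + 1 ≤ 2 * g := by
  omega

end Aux

theorem domNum_ge_ecc_boundary {V : Type*} [Fintype V]
    (G : SimpleGraph V) (hG : G.Connected) (h2 : 2 ≤ Fintype.card V) :
    2 * domNum G ≥ eccSet G (boundary G) + 1 := by
  classical
  have hV : Nonempty V := Fintype.card_pos_iff.mp (by omega)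
  -- a minimum dominating set
  have hdomne : {n | ∃ S : Finset V, DomSet G S ∧ S.card = n}.Nonempty :=
    ⟨Finset.univ.card, Finset.univ, fun v => Or.inl (Finset.mem_univ v), rfl⟩
  obtain ⟨S, hS, hScard⟩ : ∃ S : Finset V, DomSet G S ∧ S.card = domNum G :=
    Nat.sInf_mem hdomne
  -- dominator choice function
  have hdom : ∀ u : V, ∃ s, s ∈ S ∧ G.dist s u ≤ 1 := by
    intro u
    rcases hS u with h | ⟨s, hs, hadj⟩
    · exact ⟨u, h, by rw [SimpleGraph.dist_self]; omega⟩
    · exact ⟨s, hs, le_of_eq (SimpleGraph.dist_eq_one_iff_adj.mpr hadj)⟩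
  choose f hfS hf using hdom
  -- diameter facts
  have hnt : G.ediam ≠ ⊤ := by
    have hle : G.ediam ≤ ((Finset.univ.sup fun p : V × V => G.dist p.1 p.2 : ℕ) : ℕ∞) := by
      apply SimpleGraph.ediam_le_of_edist_le
      intro a b
      have hr : G.edist a b ≠ ⊤ :=
        SimpleGraph.edist_ne_top_iff_reachable.mpr (hG.preconnected a b)
      have hcast : G.edist a b = ((G.dist a b : ℕ) : ℕ∞) := (ENat.coe_toNat hr).symm
      rw [hcast]
      have : G.dist a b ≤ (Finset.univ.sup fun p : V × V => G.dist p.1 p.2) :=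
        Finset.le_sup (f := fun p : V × V => G.dist p.1 p.2) (Finset.mem_univ (a, b))
      exact_mod_cast this
    exact ne_top_of_le_ne_top (ENat.coe_ne_top _) hle
  have hdle : ∀ a b : V, G.dist a b ≤ G.diam := fun a b => SimpleGraph.dist_le_diam hnt
  -- eccentricity facts
  have heccge : ∀ u x : V, G.dist u x ≤ eccVert G u := fun u x =>
    Finset.le_sup (Finset.mem_univ x)
  have heccle : ∀ u : V, eccVert G u ≤ G.diam := fun u =>
    Finset.sup_le fun x _ => hdle u x
  have heccex : ∀ u : V, ∃ x : V, eccVert G u = G.dist u x := by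
    intro u
    obtain ⟨x, _, hx⟩ := Finset.exists_mem_eq_sup Finset.univ Finset.univ_nonempty
      (fun x => G.dist u x)
    exact ⟨x, hx⟩
  have hmemB : ∀ u : V, u ∈ boundary G ↔ eccVert G u = G.diam := by
    intro u
    simp [boundary]
  -- boundary is nonempty
  have hBne : (boundary G).Nonempty := by
    obtain ⟨u, w, huw⟩ := SimpleGraph.exists_dist_eq_diam (G := G)
    refine ⟨u, (hmemB u).mpr (le_antisymm (heccle u) ?_)⟩
    calc G.diam = G.dist u w := huw.symm
      _ ≤ eccVert G u := heccge u w
  -- the vertex attaining the eccentricity of the boundary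
  obtain ⟨v, _, hvk⟩ := Finset.exists_mem_eq_sup Finset.univ Finset.univ_nonempty
    (fun u => distToSet G u (boundary G))
  set k := eccSet G (boundary G) with hkdef
  have hvk' : distToSet G v (boundary G) = k := hvk.symm
  -- distToSet basics
  have hdts_ex : ∀ u : V, ∃ x ∈ boundary G, G.dist u x = distToSet G u (boundary G) := by
    intro u
    have hne : {d | ∃ x ∈ boundary G, G.dist u x = d}.Nonempty := by
      obtain ⟨b, hb⟩ := hBne
      exact ⟨G.dist u b, b, hb, rfl⟩
    exact Nat.sInf_mem hne
  have hdts_le : ∀ (u : V) (x : V), x ∈ boundary G →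
      distToSet G u (boundary G) ≤ G.dist u x := by
    intro u x hx
    exact Nat.sInf_le ⟨x, hx, rfl⟩
  -- trivial case k = 0
  rcases Nat.eq_zero_or_pos k with hk0 | hkpos
  · rw [ge_iff_le, hk0, ← hScard]
    have hSne : S.Nonempty := by
      rcases hS (Classical.arbitrary V) with h | ⟨s, hs, _⟩
      · exact ⟨_, h⟩
      · exact ⟨s, hs⟩
    have := Finset.card_pos.mpr hSne
    omega
  -- main case
  obtain ⟨p, hpB, hpk⟩ := hdts_ex v
  rw [hvk'] at hpk
  -- eccentric vertex w of p
  have hpecc : eccVert G p = G.diam := (hmemB p).mp hpB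
  obtain ⟨w, hw⟩ := heccex p
  have hpw : G.dist p w = G.diam := by rw [← hw, hpecc]
  have hwB : w ∈ boundary G := by
    refine (hmemB w).mpr (le_antisymm (heccle w) ?_)
    calc G.diam = G.dist p w := hpw.symm
      _ = G.dist w p := SimpleGraph.dist_comm ..
      _ ≤ eccVert G w := heccge w p
  obtain ⟨m, hmdef⟩ : ∃ m : ℕ, G.dist v w = m := ⟨_, rfl⟩
  have hkm : k ≤ m := by
    rw [← hmdef, ← hvk']
    exact hdts_le v w hwB
  -- v is not in the boundary, so dist v w < diam
  have hvnB : v ∉ boundary G := by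
    intro hvB
    have := hdts_le v v hvB
    rw [SimpleGraph.dist_self, hvk'] at this
    omega
  have hm1 : m + 1 ≤ G.diam := by
    have h1 : G.dist v w ≤ eccVert G v := heccge v w
    have h2 : eccVert G v ≤ G.diam := heccle v
    have h3 : eccVert G v ≠ G.diam := fun h => hvnB ((hmemB v).mpr h)
    omega
  have htri : G.diam ≤ k + m := by
    have t1 : G.dist p w ≤ G.dist p v + G.dist v w := hG.dist_triangle
    have t2 : G.dist p v = G.dist v p := SimpleGraph.dist_comm ..
    omega
  -- chains
  have hxch : ∀ i : ℕ, ∃ x : V, i ≤ k → (G.dist v x = i ∧ G.dist x p + i = k) := by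
    intro i
    by_cases hi : i ≤ k
    · obtain ⟨xx, hx1, hx2⟩ := aux_chain hG v p i (by omega)
      exact ⟨xx, fun _ => ⟨hx1, by omega⟩⟩
    · exact ⟨v, fun h => absurd h hi⟩
  choose x hx using hxch
  have hzch : ∀ j : ℕ, ∃ z : V, j ≤ m → (G.dist v z = j ∧ G.dist z w + j = m) := by
    intro j
    by_cases hj : j ≤ m
    · obtain ⟨zz, hz1, hz2⟩ := aux_chain hG v w j (by omega)
      exact ⟨zz, fun _ => ⟨hz1, by omega⟩⟩
    · exact ⟨v, fun h => absurd h hj⟩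
  choose z hz using hzch
  have hych : ∀ b : ℕ, ∃ y : V, b ≤ G.diam → G.dist p y = b := by
    intro b
    by_cases hb : b ≤ G.diam
    · obtain ⟨yy, hy1, _⟩ := aux_chain hG p w b (by omega)
      exact ⟨yy, fun _ => hy1⟩
    · exact ⟨p, fun h => absurd h hb⟩
  choose y hy using hych
  -- collision lemma: equal dominators force closeness
  have hclose : ∀ a b : V, f a = f b → G.dist a b ≤ 2 := by
    intro a b hab
    have h1 : G.dist a b ≤ G.dist a (f a) + G.dist (f a) b := hG.dist_triangle
    have h2 : G.dist a (f a) = G.dist (f a) a := SimpleGraph.dist_comm ..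
    have h3 : G.dist (f a) a ≤ 1 := hf a
    have h4 : G.dist (f a) b ≤ 1 := by rw [hab]; exact hf b
    omega
  -- ======= count 1 : the p → w geodesic gives diam/3 + 1 dominators =======
  have hcountB : G.diam / 3 + 1 ≤ S.card := by
    set IB : Finset ℕ :=
      (Finset.range (G.diam / 3 + 1)).image (fun q => 3 * q + G.diam % 3) with hIB
    have hmemIB : ∀ n ∈ IB, n ≤ G.diam ∧ n % 3 = G.diam % 3 := by
      intro n hn
      rw [hIB] at hn
      obtain ⟨q, hq, rfl⟩ := Finset.mem_image.mp hn
      rw [Finset.mem_range] at hq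
      omega
    have hinj : Set.InjOn (fun n => f (y n)) (IB : Set ℕ) := by
      intro n1 hn1 n2 hn2 heq
      obtain ⟨hle1, hr1⟩ := hmemIB n1 hn1
      obtain ⟨hle2, hr2⟩ := hmemIB n2 hn2
      have hd := hclose _ _ heq
      have e1 := hy n1 hle1
      have e2 := hy n2 hle2
      have t1 : G.dist p (y n2) ≤ G.dist p (y n1) + G.dist (y n1) (y n2) := hG.dist_triangle
      have t2 : G.dist p (y n1) ≤ G.dist p (y n2) + G.dist (y n2) (y n1) := hG.dist_triangle
      have hcomm : G.dist (y n2) (y n1) = G.dist (y n1) (y n2) := SimpleGraph.dist_comm ..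
      omega
    calc G.diam / 3 + 1 = IB.card := by
          rw [hIB, Finset.card_image_of_injective _ (fun q1 q2 h => by omega),
            Finset.card_range]
      _ = (IB.image (fun n => f (y n))).card := (Finset.card_image_of_injOn hinj).symm
      _ ≤ S.card := by
          apply Finset.card_le_card
          intro s hs'
          obtain ⟨n, _, rfl⟩ := Finset.mem_image.mp hs'
          exact hfS _
  -- ======= count 2 : the two chains from v =======
  obtain ⟨t, ht⟩ : ∃ t : ℕ, G.diam + t = k + m := ⟨k + m - G.diam, by omega⟩
  obtain ⟨jmin, hjmin⟩ : ∃ jm : ℕ,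
      (k % 3 = m % 3 ∧ jm = t / 2 + 2) ∨ (¬ (k % 3 = m % 3) ∧ jm = t / 2 + 3) := by
    by_cases hac : k % 3 = m % 3
    · exact ⟨t / 2 + 2, Or.inl ⟨hac, rfl⟩⟩
    · exact ⟨t / 2 + 3, Or.inr ⟨hac, rfl⟩⟩
  obtain ⟨j0, hj0r, hj0ge, hj0le⟩ :
      ∃ j0 : ℕ, j0 % 3 = m % 3 ∧ jmin ≤ j0 ∧ j0 ≤ jmin + 2 :=
    ⟨jmin + (m % 3 + 3 - jmin % 3) % 3, by omega, by omega, by omega⟩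
  obtain ⟨nJ, hnJ1, hnJ2⟩ :
      ∃ nJ : ℕ, (j0 ≤ m → nJ = (m - j0) / 3 + 1) ∧ (m < j0 → nJ = 0) := by
    by_cases hj0m : j0 ≤ m
    · exact ⟨(m - j0) / 3 + 1, fun _ => rfl, fun h => by omega⟩
    · exact ⟨0, fun h => by omega, fun _ => rfl⟩
  obtain ⟨K0, hK0⟩ : ∃ K0 : ℕ, K0 = k + m + 1 := ⟨_, rfl⟩
  set IA : Finset ℕ := (Finset.range (k / 3 + 1)).image (fun q => 3 * q + k % 3) with hIA
  set JC : Finset ℕ := (Finset.range nJ).image (fun q => 3 * q + j0 + K0) with hJC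
  have hmemIA : ∀ n ∈ IA, n ≤ k ∧ n % 3 = k % 3 := by
    intro n hn
    rw [hIA] at hn
    obtain ⟨q, hq, rfl⟩ := Finset.mem_image.mp hn
    rw [Finset.mem_range] at hq
    omega
  have hmemJC : ∀ n ∈ JC, K0 ≤ n ∧ n - K0 ≤ m ∧ (n - K0) % 3 = m % 3 ∧ j0 ≤ n - K0 := by
    intro n hn
    rw [hJC] at hn
    obtain ⟨q, hq, rfl⟩ := Finset.mem_image.mp hn
    rw [Finset.mem_range] at hq
    have hj0m : j0 ≤ m := by
      by_contra hcon
      have := hnJ2 (by omega)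
      omega
    have hnJv := hnJ1 hj0m
    omega
  -- the combined marked set and the dominator map
  set φ : ℕ → V := fun n => if n ≤ k then f (x n) else f (z (n - K0)) with hφdef
  have hφIA : ∀ n ∈ IA, φ n = f (x n) := by
    intro n hn
    rw [hφdef]
    simp only [(hmemIA n hn).1, if_pos]
  have hφJC : ∀ n ∈ JC, φ n = f (z (n - K0)) := by
    intro n hn
    have h := hmemJC n hn
    rw [hφdef]
    have hnk : ¬ n ≤ k := by omega
    simp only [hnk, if_false]
  -- cross collisions are impossible
  have hcross : ∀ i j : ℕ, i ≤ k → i % 3 = k % 3 → j ≤ m → j % 3 = m % 3 → j0 ≤ j →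
      f (x i) = f (z j) → False := by
    intro i j hik hia hjm hjc hjj0 heq
    have hd := hclose _ _ heq
    obtain ⟨hxv, hxp⟩ := hx i hik
    obtain ⟨hzv, hzw⟩ := hz j hjm
    -- |i - j| ≤ dist (x i) (z j)
    have t1 : G.dist v (z j) ≤ G.dist v (x i) + G.dist (x i) (z j) := hG.dist_triangle
    have t2 : G.dist v (x i) ≤ G.dist v (z j) + G.dist (z j) (x i) := hG.dist_triangle
    have hcomm : G.dist (z j) (x i) = G.dist (x i) (z j) := SimpleGraph.dist_comm ..
    -- diam + i + j ≤ k + m + dist (x i) (z j)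
    have t3 : G.dist p w ≤ G.dist p (x i) + G.dist (x i) w := hG.dist_triangle
    have t4 : G.dist (x i) w ≤ G.dist (x i) (z j) + G.dist (z j) w := hG.dist_triangle
    have hcomm2 : G.dist p (x i) = G.dist (x i) p := SimpleGraph.dist_comm ..
    refine aux_cross_arith (k := k) (m := m) (diam := G.diam) (t := t) (jmin := jmin)
      (j0 := j0) (i := i) (j := j) (d1 := G.dist (x i) (z j))
      ht hjmin hj0ge hia hjc hjj0 hd (by omega) (by omega) (by omega)
  have hcountA : (k / 3 + 1) + nJ ≤ S.card := by
    have hdisj : Disjoint IA JC := by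
      rw [Finset.disjoint_left]
      intro n hnA hnC
      have h1 := (hmemIA n hnA).1
      have h2 := (hmemJC n hnC).1
      omega
    have hinj : Set.InjOn φ ((IA ∪ JC : Finset ℕ) : Set ℕ) := by
      intro n1 hn1 n2 hn2 heq
      rw [Finset.mem_coe, Finset.mem_union] at hn1 hn2
      rcases hn1 with h1 | h1 <;> rcases hn2 with h2 | h2
      · -- both in IA
        obtain ⟨hle1, hr1⟩ := hmemIA n1 h1
        obtain ⟨hle2, hr2⟩ := hmemIA n2 h2
        rw [hφIA n1 h1, hφIA n2 h2] at heq
        have hd := hclose _ _ heq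
        obtain ⟨e1, _⟩ := hx n1 hle1
        obtain ⟨e2, _⟩ := hx n2 hle2
        have t1 : G.dist v (x n2) ≤ G.dist v (x n1) + G.dist (x n1) (x n2) := hG.dist_triangle
        have t2 : G.dist v (x n1) ≤ G.dist v (x n2) + G.dist (x n2) (x n1) := hG.dist_triangle
        have hcomm : G.dist (x n2) (x n1) = G.dist (x n1) (x n2) := SimpleGraph.dist_comm ..
        omega
      · -- n1 in IA, n2 in JC
        exfalso
        obtain ⟨hle1, hr1⟩ := hmemIA n1 h1
        obtain ⟨hK, hle2, hr2, hge2⟩ := hmemJC n2 h2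
        rw [hφIA n1 h1, hφJC n2 h2] at heq
        exact hcross n1 (n2 - K0) hle1 hr1 hle2 hr2 hge2 heq
      · -- n1 in JC, n2 in IA
        exfalso
        obtain ⟨hle2, hr2⟩ := hmemIA n2 h2
        obtain ⟨hK, hle1, hr1, hge1⟩ := hmemJC n1 h1
        rw [hφJC n1 h1, hφIA n2 h2] at heq
        exact hcross n2 (n1 - K0) hle2 hr2 hle1 hr1 hge1 heq.symm
      · -- both in JC
        obtain ⟨hK1, hle1, hr1, _⟩ := hmemJC n1 h1
        obtain ⟨hK2, hle2, hr2, _⟩ := hmemJC n2 h2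
        rw [hφJC n1 h1, hφJC n2 h2] at heq
        have hd := hclose _ _ heq
        obtain ⟨e1, _⟩ := hz (n1 - K0) hle1
        obtain ⟨e2, _⟩ := hz (n2 - K0) hle2
        have t1 : G.dist v (z (n2 - K0)) ≤
            G.dist v (z (n1 - K0)) + G.dist (z (n1 - K0)) (z (n2 - K0)) := hG.dist_triangle
        have t2 : G.dist v (z (n1 - K0)) ≤
            G.dist v (z (n2 - K0)) + G.dist (z (n2 - K0)) (z (n1 - K0)) := hG.dist_triangle
        have hcomm : G.dist (z (n2 - K0)) (z (n1 - K0)) =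
            G.dist (z (n1 - K0)) (z (n2 - K0)) := SimpleGraph.dist_comm ..
        omega
    have hcardIA : IA.card = k / 3 + 1 := by
      rw [hIA, Finset.card_image_of_injective _ (fun q1 q2 h => by omega), Finset.card_range]
    have hcardJC : JC.card = nJ := by
      rw [hJC, Finset.card_image_of_injective _ (fun q1 q2 h => by omega), Finset.card_range]
    calc (k / 3 + 1) + nJ = (IA ∪ JC).card := by
          rw [Finset.card_union_of_disjoint hdisj, hcardIA, hcardJC]
      _ = ((IA ∪ JC).image φ).card := (Finset.card_image_of_injOn hinj).symm
      _ ≤ S.card := by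
          apply Finset.card_le_card
          intro s hs'
          obtain ⟨n, hn, rfl⟩ := Finset.mem_image.mp hs'
          rw [Finset.mem_union] at hn
          rcases hn with h | h
          · rw [hφIA n h]; exact hfS _
          · rw [hφJC n h]; exact hfS _
  -- ======= final arithmetic =======
  rw [ge_iff_le, ← hScard]
  have hnIbr : k / 3 + 1 = (k - k % 3) / 3 + 1 := by omega
  have hnBbr : G.diam / 3 + 1 = (G.diam - G.diam % 3) / 3 + 1 := by omega
  rcases hjmin with ⟨hac, hjm⟩ | ⟨hac, hjm⟩
  · exact aux_final_eq hkpos hkm hm1 ht rfl rfl hjm hj0ge hj0le hj0r hnIbr hnJ1 hnJ2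
      hnBbr hcountA hcountB hac
  · exact aux_final_ne hkpos hkm hm1 ht rfl rfl hjm hj0ge hj0le hj0r hnIbr hnJ1 hnJ2
      hnBbr hcountA hcountB hac
end

section
/- Let G be a finite connected simple graph with boundary B ≠ V(G). Let x, y be vertices realizing the diameter (d(x,y) = diam(G)) and let z be a vertex with d(z,B) = ecc_G(B) = R. Then d(x,z) ≥ R, d(y,z) ≥ R, and d(x,y) ≥ R + 1; in particular d(x,y) + d(x,z) + d(y,z) ≥ 3R + 1. -/
open SimpleGraph Finset

theorem boundary_distance_bounds {V : Type*} [Fintype V]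
    (G : SimpleGraph V) (hG : G.Connected)
    (hB : boundary G ≠ univ) (x y z : V) (R : ℕ)
    (hxy : G.dist x y = G.diam)
    (hz : distToSet G z (boundary G) = R) (hR : eccSet G (boundary G) = R) :
    R ≤ G.dist x z ∧ R ≤ G.dist y z ∧ R + 1 ≤ G.dist x y ∧
      3 * R + 1 ≤ G.dist x y + G.dist x z + G.dist y z := by
  have hne : Nonempty V := hG.nonempty
  have hdtop : G.ediam ≠ ⊤ := by
    obtain ⟨u, v, huv⟩ := G.exists_edist_eq_ediam_of_finite
    rw [← huv]
    exact edist_ne_top_iff_reachable.mpr (hG.preconnected u v)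
  have hle : ∀ u v : V, G.dist u v ≤ G.diam := fun u v => dist_le_diam hdtop
  have hdiam0 : G.diam ≠ 0 := by
    intro h0
    apply hB
    apply Finset.eq_univ_iff_forall.mpr
    intro v
    simp only [boundary, Finset.mem_filter, Finset.mem_univ, true_and]
    have : eccVert G v ≤ G.diam := Finset.sup_le fun u _ => hle v u
    omega
  have hxB : x ∈ boundary G := by
    simp only [boundary, Finset.mem_filter, Finset.mem_univ, true_and]
    exact le_antisymm (Finset.sup_le fun u _ => hle x u)
      (hxy ▸ Finset.le_sup (f := fun u => G.dist x u) (Finset.mem_univ y))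
  have hyB : y ∈ boundary G := by
    simp only [boundary, Finset.mem_filter, Finset.mem_univ, true_and]
    refine le_antisymm (Finset.sup_le fun u _ => hle y u) ?_
    have : G.dist y x = G.diam := by rw [G.dist_comm, hxy]
    exact this ▸ Finset.le_sup (f := fun u => G.dist y u) (Finset.mem_univ x)
  have h1 : R ≤ G.dist x z := by
    rw [← hz, G.dist_comm]
    exact Nat.sInf_le ⟨x, hxB, rfl⟩
  have h2 : R ≤ G.dist y z := by
    rw [← hz, G.dist_comm]
    exact Nat.sInf_le ⟨y, hyB, rfl⟩
  have h3 : R + 1 ≤ G.dist x y := by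
    rw [hxy]
    by_cases hzB : z ∈ boundary G
    · have hle0 : distToSet G z (boundary G) ≤ G.dist z z :=
        Nat.sInf_le ⟨z, hzB, rfl⟩
      rw [SimpleGraph.dist_self] at hle0
      omega
    · have hecc : eccVert G z ≠ G.diam := by
        simpa [boundary] using hzB
      have hecc2 : eccVert G z ≤ G.diam := Finset.sup_le fun u _ => hle z u
      have hRz : R ≤ eccVert G z := by
        calc R ≤ G.dist z x := by
              rw [← hz]; exact Nat.sInf_le ⟨x, hxB, rfl⟩
          _ ≤ eccVert G z := Finset.le_sup (f := fun u => G.dist z u) (Finset.mem_univ x)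
      omega
  exact ⟨h1, h2, h3, by omega⟩
end

section
/- For every r ≥ 3, the largest constant C_r such that γ(G) ≥ C_r · Σ_{1≤i<j≤r} d(x_i,x_j) holds for every finite connected simple graph G and every choice of r vertices x₁,…,x_r is C_r = 1/(r(r−1)). -/
open SimpleGraph Finset

namespace CrProof


variable {V : Type*}

lemma dist_getVert_le (G : SimpleGraph V) (hc : G.Connected) {u v : V} (p : G.Walk u v)
    (i : ℕ) : G.dist u (p.getVert i) ≤ i := by
  induction p generalizing i with
  | nil => simp [Walk.getVert, SimpleGraph.dist_self]
  | @cons a b c h q ih =>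
    cases i with
    | zero => simp
    | succ n =>
      calc G.dist a ((Walk.cons h q).getVert (n+1)) = G.dist a (q.getVert n) := rfl
        _ ≤ G.dist a b + G.dist b (q.getVert n) := hc.dist_triangle
        _ ≤ 1 + n := by
            have h1 : G.dist a b ≤ 1 := by simpa using SimpleGraph.dist_le h.toWalk
            exact Nat.add_le_add h1 (ih n)
        _ = n + 1 := by omega

lemma dist_getVert_ge (G : SimpleGraph V) (hc : G.Connected) {u v : V} (p : G.Walk u v)
    {i : ℕ} (hi : i ≤ p.length) : G.dist (p.getVert i) v ≤ p.length - i := by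
  have := dist_getVert_le G hc p.reverse (p.length - i)
  rw [Walk.getVert_reverse] at this
  have h2 : p.length - (p.length - i) = i := by omega
  rw [h2] at this
  rw [SimpleGraph.dist_comm]
  simpa using this

/-- On a shortest walk, distances split additively at any support vertex. -/
lemma dist_split [DecidableEq V] (G : SimpleGraph V) (hc : G.Connected) {u v s : V} (p : G.Walk u v)
    (hp : p.length = G.dist u v) (hs : s ∈ p.support) :
    G.dist u s = (p.takeUntil s hs).length ∧ G.dist s v = (p.dropUntil s hs).length ∧
      G.dist u s + G.dist s v = G.dist u v := by
  have hlen : (p.takeUntil s hs).length + (p.dropUntil s hs).length = p.length := by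
    rw [← Walk.length_append, Walk.take_spec]
  have h1 : G.dist u s ≤ (p.takeUntil s hs).length := SimpleGraph.dist_le _
  have h2 : G.dist s v ≤ (p.dropUntil s hs).length := SimpleGraph.dist_le _
  have h3 : G.dist u v ≤ G.dist u s + G.dist s v := hc.dist_triangle
  omega

lemma dist_inj_on_shortest [DecidableEq V] (G : SimpleGraph V) (hc : G.Connected) {v w : V} (q : G.Walk v w)
    (hq : q.length = G.dist v w) :
    ∀ s ∈ q.support, ∀ s' ∈ q.support, G.dist v s = G.dist v s' → s = s' := by
  intro s hs s' hs' hd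
  have key := dist_split G hc q hq hs
  have key' := dist_split G hc q hq hs'
  have hsplit : s' ∈ (q.takeUntil s hs).support ∨ s' ∈ (q.dropUntil s hs).support := by
    rw [← Walk.mem_support_append_iff, Walk.take_spec]
    exact hs'
  rcases hsplit with h | h
  · -- s' on the initial segment v → s
    have ht : (q.takeUntil s hs).length = G.dist v s := key.1.symm
    have := dist_split G hc (q.takeUntil s hs) ht h
    have hzero : G.dist s' s = 0 := by omega
    exact ((hc.dist_eq_zero_iff).mp hzero).symm
  · -- s' on the final segment s → w
    have hdrop : (q.dropUntil s hs).length = G.dist s w := key.2.1.symm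
    have := dist_split G hc (q.dropUntil s hs) hdrop h
    have hzero : G.dist s s' = 0 := by omega
    exact (hc.dist_eq_zero_iff).mp hzero

/-- In a connected graph on `n` vertices, the three pairwise distances among any
three vertices sum to at most `2(n-1)`. -/
lemma three_dist_le [Fintype V] (G : SimpleGraph V) (hc : G.Connected) (u v w : V) :
    G.dist u v + G.dist v w + G.dist u w ≤ 2 * (Fintype.card V - 1) := by
  classical
  obtain ⟨p₀, hp₀⟩ := hc.exists_walk_length_eq_dist u v
  obtain ⟨q₀, hq₀⟩ := hc.exists_walk_length_eq_dist v w
  set p := p₀.bypass with hpdef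
  set q := q₀.bypass with hqdef
  have hp : p.length = G.dist u v :=
    le_antisymm (hp₀ ▸ Walk.length_bypass_le p₀) (SimpleGraph.dist_le p)
  have hq : q.length = G.dist v w :=
    le_antisymm (hq₀ ▸ Walk.length_bypass_le q₀) (SimpleGraph.dist_le q)
  have hpp : p.IsPath := Walk.bypass_isPath p₀
  have hqp : q.IsPath := Walk.bypass_isPath q₀
  set A : Finset V := p.support.toFinset with hA
  set B : Finset V := q.support.toFinset with hB
  have hAcard : A.card = p.length + 1 := by
    rw [hA, List.toFinset_card_of_nodup hpp.support_nodup, Walk.length_support]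
  have hBcard : B.card = q.length + 1 := by
    rw [hB, List.toFinset_card_of_nodup hqp.support_nodup, Walk.length_support]
  have hint : A.card + B.card ≤ Fintype.card V + (A ∩ B).card := by
    have := Finset.card_union_add_card_inter A B
    have h2 : (A ∪ B).card ≤ Fintype.card V := by
      simpa using Finset.card_le_univ (A ∪ B)
    omega
  -- the image of A ∩ B under dist v · 
  set f : V → ℕ := fun s => G.dist v s with hf
  have hinj : Set.InjOn f (A ∩ B : Finset V) := by
    intro s hsm s' hsm' hss
    simp only [Finset.coe_inter, Set.mem_inter_iff, Finset.mem_coe, hA, hB,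
      List.mem_toFinset] at hsm hsm'
    exact dist_inj_on_shortest G hc q hq s hsm.2 s' hsm'.2 hss
  have himcard : ((A ∩ B).image f).card = (A ∩ B).card :=
    Finset.card_image_of_injOn hinj
  have hne : v ∈ A ∩ B := by
    simp [hA, hB, Walk.end_mem_support, Walk.start_mem_support]
  -- the max of the image
  have hnonempty : ((A ∩ B).image f).Nonempty := ⟨f v, Finset.mem_image_of_mem f hne⟩
  set c : ℕ := ((A ∩ B).image f).max' hnonempty with hcdef
  have hcmem : c ∈ (A ∩ B).image f := Finset.max'_mem _ _
  obtain ⟨s, hsmem, hfs⟩ := Finset.mem_image.mp hcmem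
  -- c is at least the card minus one
  have hcard_le : ((A ∩ B).image f).card ≤ c + 1 := by
    calc ((A ∩ B).image f).card ≤ (Finset.range (c+1)).card := by
          apply Finset.card_le_card
          intro a ha
          simp only [Finset.mem_range]
          have := Finset.le_max' _ a ha
          omega
      _ = c + 1 := Finset.card_range _
  have hsA : s ∈ p.support := by
    have := (Finset.mem_inter.mp hsmem).1
    simpa [hA, List.mem_toFinset] using this
  have hsB : s ∈ q.support := by
    have := (Finset.mem_inter.mp hsmem).2
    simpa [hB, List.mem_toFinset] using this
  have hp1 := (dist_split G hc p hp hsA).2.2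
  have hq1 := (dist_split G hc q hq hsB).2.2
  have htri : G.dist u w ≤ G.dist u s + G.dist s w := hc.dist_triangle
  have hvs : G.dist v s = c := hfs
  have hsv : G.dist s v = c := by rw [SimpleGraph.dist_comm]; exact hvs
  -- put it together
  have hn1 : 1 ≤ Fintype.card V := Fintype.card_pos_iff.mpr ⟨u⟩
  omega





/-- Auxiliary graph on a dominating set: join two vertices if their `G`-distance is ≤ 3. -/
def Hgraph (G : SimpleGraph V) (D : Finset V) : SimpleGraph {a : V // a ∈ D} where
  Adj a b := a ≠ b ∧ G.dist a.1 b.1 ≤ 3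
  symm := by
    refine ⟨fun a b h => ?_⟩
    exact ⟨h.1.symm, by rw [SimpleGraph.dist_comm]; exact h.2⟩
  loopless := by refine ⟨fun a h => ?_⟩; exact h.1 rfl

lemma H_reachable (G : SimpleGraph V) (hc : G.Connected) (D : Finset V) (hD : DomSet G D) :
    ∀ a b : {a : V // a ∈ D}, (Hgraph G D).Reachable a b := by
  have main : ∀ n : ℕ, ∀ a b : {a : V // a ∈ D}, G.dist a.1 b.1 = n →
      (Hgraph G D).Reachable a b := by
    intro n
    induction n using Nat.strong_induction_on with
    | _ n ih =>
      intro a b hab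
      by_cases heq : a = b
      · exact heq ▸ Reachable.refl a
      · have hne : a ≠ b := heq
        by_cases h3 : G.dist a.1 b.1 ≤ 3
        · exact (show (Hgraph G D).Adj a b from ⟨hne, h3⟩).reachable
        · have h4 : 4 ≤ n := by omega
          obtain ⟨p, hp⟩ := hc.exists_walk_length_eq_dist a.1 b.1
          have hplen : p.length = n := by rw [hp, hab]
          set s := p.getVert 2 with hsdef
          have h1 : G.dist a.1 s ≤ 2 := dist_getVert_le G hc p 2
          have h2 : G.dist s b.1 ≤ n - 2 := by
            have := dist_getVert_ge G hc p (i := 2) (by omega)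
            rw [← hsdef] at this
            omega
          -- find a dominator of s inside D
          have hdom : ∃ u : V, ∃ hu : u ∈ D, G.dist u s ≤ 1 := by
            rcases hD s with hsD | ⟨u, huD, hadj⟩
            · exact ⟨s, hsD, by simp [SimpleGraph.dist_self]⟩
            · exact ⟨u, huD, by simpa using SimpleGraph.dist_le hadj.toWalk⟩
          obtain ⟨u, huD, hus⟩ := hdom
          set w' : {a : V // a ∈ D} := ⟨u, huD⟩ with hw'def
          have hw's : G.dist w'.1 s ≤ 1 := hus
          have hsw' : G.dist s w'.1 ≤ 1 := by rwa [SimpleGraph.dist_comm]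
          have haw' : G.dist a.1 w'.1 ≤ 3 := by
            have t := hc.dist_triangle (u := a.1) (v := s) (w := w'.1)
            omega
          have hw'b : G.dist w'.1 b.1 ≤ n - 1 := by
            have t := hc.dist_triangle (u := w'.1) (v := s) (w := b.1)
            omega
          have hnew' : a ≠ w' := by
            intro h
            rw [← h] at hw'b
            omega
          have step : (Hgraph G D).Adj a w' := ⟨hnew', haw'⟩
          exact step.reachable.trans (ih (G.dist w'.1 b.1) (by omega) w' b rfl)
  intro a b
  exact main (G.dist a.1 b.1) a b rfl

lemma G_dist_le_three_H (G : SimpleGraph V) (hc : G.Connected) (D : Finset V)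
    (hD : DomSet G D) (a b : {a : V // a ∈ D}) :
    G.dist a.1 b.1 ≤ 3 * (Hgraph G D).dist a b := by
  obtain ⟨p, hp⟩ := (H_reachable G hc D hD a b).exists_walk_length_eq_dist
  rw [← hp]
  clear hp
  induction p with
  | nil => simp
  | @cons a c b h q ih =>
    calc G.dist a.1 b.1 ≤ G.dist a.1 c.1 + G.dist c.1 b.1 := hc.dist_triangle
      _ ≤ 3 + 3 * q.length := Nat.add_le_add h.2 ih
      _ = 3 * (Walk.cons h q).length := by simp [Walk.length_cons]; ring

lemma key [Fintype V] (G : SimpleGraph V) (hc : G.Connected) (x y z : V) :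
    G.dist x y + G.dist y z + G.dist x z ≤ 6 * domNum G := by
  classical
  have hVne : Nonempty V := hc.nonempty
  have hne : {n | ∃ S : Finset V, DomSet G S ∧ S.card = n}.Nonempty :=
    ⟨(univ : Finset V).card, univ, fun v => Or.inl (mem_univ v), rfl⟩
  obtain ⟨D, hD, hDcard⟩ := Nat.sInf_mem hne
  have hγ : D.card = domNum G := hDcard
  have hDne : D.Nonempty := by
    rcases hD (Classical.arbitrary V) with h | ⟨u, hu, _⟩
    · exact ⟨_, h⟩
    · exact ⟨u, hu⟩
  have hD1 : 1 ≤ D.card := Finset.card_pos.mpr hDne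
  have dom : ∀ v : V, ∃ u : {a : V // a ∈ D}, G.dist v u.1 ≤ 1 := by
    intro v
    rcases hD v with h | ⟨u, hu, hadj⟩
    · exact ⟨⟨v, h⟩, by simp [SimpleGraph.dist_self]⟩
    · exact ⟨⟨u, hu⟩, by
        rw [SimpleGraph.dist_comm]
        simpa using SimpleGraph.dist_le hadj.toWalk⟩
  obtain ⟨ux, hux⟩ := dom x
  obtain ⟨uy, huy⟩ := dom y
  obtain ⟨uz, huz⟩ := dom z
  haveI : Nonempty {a : V // a ∈ D} := ⟨⟨hDne.choose, hDne.choose_spec⟩⟩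
  have hHconn : (Hgraph G D).Connected := ⟨fun a b => H_reachable G hc D hD a b⟩
  have hcardH : Fintype.card {a : V // a ∈ D} = D.card := Fintype.card_coe D
  have W := three_dist_le (Hgraph G D) hHconn ux uy uz
  rw [hcardH] at W
  have bxy := G_dist_le_three_H G hc D hD ux uy
  have byz := G_dist_le_three_H G hc D hD uy uz
  have bxz := G_dist_le_three_H G hc D hD ux uz
  have exy : G.dist x y ≤ G.dist x ux.1 + G.dist ux.1 uy.1 + G.dist uy.1 y := by
    have t1 := hc.dist_triangle (u := x) (v := ux.1) (w := y)
    have t2 := hc.dist_triangle (u := ux.1) (v := uy.1) (w := y)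
    omega
  have eyz : G.dist y z ≤ G.dist y uy.1 + G.dist uy.1 uz.1 + G.dist uz.1 z := by
    have t1 := hc.dist_triangle (u := y) (v := uy.1) (w := z)
    have t2 := hc.dist_triangle (u := uy.1) (v := uz.1) (w := z)
    omega
  have exz : G.dist x z ≤ G.dist x ux.1 + G.dist ux.1 uz.1 + G.dist uz.1 z := by
    have t1 := hc.dist_triangle (u := x) (v := ux.1) (w := z)
    have t2 := hc.dist_triangle (u := ux.1) (v := uz.1) (w := z)
    omega
  have hyy : G.dist uy.1 y ≤ 1 := by rwa [SimpleGraph.dist_comm]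
  have hzz : G.dist uz.1 z ≤ 1 := by rwa [SimpleGraph.dist_comm]
  omega



variable {r : ℕ}

lemma sum_ite_ne (a : Fin r) (c : ℕ) : ∑ k, (if k ≠ a then c else 0) = (r - 1) * c := by
  rw [← Finset.sum_filter, Finset.filter_ne']
  simp [Finset.card_erase_of_mem]

lemma sum_ite_ne2 {a b : Fin r} (hab : a ≠ b) (c : ℕ) :
    ∑ k, (if k ≠ a ∧ k ≠ b then c else 0) = (r - 2) * c := by
  rw [← Finset.sum_filter]
  have hfe : Finset.filter (fun k => k ≠ a ∧ k ≠ b) univ = (univ.erase a).erase b := by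
    ext k
    simp only [Finset.mem_filter, Finset.mem_erase, Finset.mem_univ, and_true, true_and]
    tauto
  rw [hfe]
  rw [Finset.sum_const, Finset.card_erase_of_mem (by simp [Ne.symm hab]),
    Finset.card_erase_of_mem (by simp)]
  simp [smul_eq_mul]
  left
  omega

lemma inner3_k (i j : Fin r) (c : ℕ) :
    ∑ k, (if i ≠ j ∧ j ≠ k ∧ i ≠ k then c else 0) = if i ≠ j then (r - 2) * c else 0 := by
  by_cases hij : i = j
  · simp [hij]
  · have h2 : ∑ k, (if i ≠ j ∧ j ≠ k ∧ i ≠ k then c else 0)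
        = ∑ k, (if (k ≠ j ∧ k ≠ i) then c else 0) := by
      apply Finset.sum_congr rfl
      intro k _
      apply if_congr _ rfl rfl
      constructor
      · rintro ⟨_, h1, h2⟩; exact ⟨h1.symm, h2.symm⟩
      · rintro ⟨h1, h2⟩; exact ⟨hij, h1.symm, h2.symm⟩
    rw [h2, sum_ite_ne2 (fun h => hij h.symm) c, if_pos hij]

lemma inner3_i (j k : Fin r) (c : ℕ) :
    ∑ i, (if i ≠ j ∧ j ≠ k ∧ i ≠ k then c else 0) = if j ≠ k then (r - 2) * c else 0 := by
  by_cases hjk : j = k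
  · simp [hjk]
  · have h2 : ∑ i, (if i ≠ j ∧ j ≠ k ∧ i ≠ k then c else 0)
        = ∑ i, (if (i ≠ j ∧ i ≠ k) then c else 0) := by
      apply Finset.sum_congr rfl
      intro i _
      apply if_congr _ rfl rfl
      tauto
    rw [h2, sum_ite_ne2 hjk c, if_pos hjk]

lemma inner3_j (i k : Fin r) (c : ℕ) :
    ∑ j, (if i ≠ j ∧ j ≠ k ∧ i ≠ k then c else 0) = if i ≠ k then (r - 2) * c else 0 := by
  by_cases hik : i = k
  · simp [hik]
  · have h2 : ∑ j, (if i ≠ j ∧ j ≠ k ∧ i ≠ k then c else 0)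
        = ∑ j, (if (j ≠ i ∧ j ≠ k) then c else 0) := by
      apply Finset.sum_congr rfl
      intro j _
      apply if_congr _ rfl rfl
      constructor
      · rintro ⟨h1, h2, _⟩; exact ⟨h1.symm, h2⟩
      · rintro ⟨h1, h2⟩; exact ⟨h1.symm, h2, hik⟩
    rw [h2, sum_ite_ne2 hik c, if_pos hik]

/-- Main counting bound over ℕ. -/
lemma nat_bound {V : Type*} [Fintype V] (G : SimpleGraph V) (hc : G.Connected)
    (hr : 3 ≤ r) (x : Fin r → V) :
    (∑ p ∈ (univ ×ˢ univ).filter (fun p : Fin r × Fin r => p.1 < p.2),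
        G.dist (x p.1) (x p.2)) ≤ r * (r - 1) * domNum G := by
  classical
  set γ := domNum G with hγ
  set d : Fin r → Fin r → ℕ := fun i j => G.dist (x i) (x j) with hd
  have hdsymm : ∀ i j, d i j = d j i := fun i j => SimpleGraph.dist_comm
  set Sord : ℕ := ∑ i, ∑ j, (if i ≠ j then d i j else 0) with hSord
  set S : ℕ := ∑ i, ∑ j, ∑ k,
      (if i ≠ j ∧ j ≠ k ∧ i ≠ k then d i j + d j k + d i k else 0) with hS
  -- upper bound on S
  have hub : S ≤ r * ((r - 1) * ((r - 2) * (6 * γ))) := by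
    have h1 : S ≤ ∑ i : Fin r, ∑ j, ∑ k,
        (if i ≠ j ∧ j ≠ k ∧ i ≠ k then 6 * γ else 0) := by
      apply Finset.sum_le_sum; intro i _
      apply Finset.sum_le_sum; intro j _
      apply Finset.sum_le_sum; intro k _
      split
      · exact key G hc (x i) (x j) (x k)
      · exact le_refl 0
    calc S ≤ _ := h1
      _ = ∑ i : Fin r, ∑ j, (if i ≠ j then (r - 2) * (6 * γ) else 0) := by
          apply Finset.sum_congr rfl; intro i _
          apply Finset.sum_congr rfl; intro j _
          exact inner3_k i j (6 * γ)
      _ = ∑ i : Fin r, (r - 1) * ((r - 2) * (6 * γ)) := by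
          apply Finset.sum_congr rfl; intro i _
          have : ∀ j : Fin r, (if i ≠ j then (r-2)*(6*γ) else 0)
              = (if j ≠ i then (r-2)*(6*γ) else 0) := by
            intro j; apply if_congr ne_comm rfl rfl
          rw [Finset.sum_congr rfl (fun j _ => this j), sum_ite_ne i ((r-2)*(6*γ))]
      _ = r * ((r - 1) * ((r - 2) * (6 * γ))) := by
          rw [Finset.sum_const, Finset.card_univ, Fintype.card_fin, smul_eq_mul]
  -- lower: S = 3 * (r-2) * Sord
  have hsplit : S = (∑ i, ∑ j, ∑ k, (if i ≠ j ∧ j ≠ k ∧ i ≠ k then d i j else 0))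
      + (∑ i, ∑ j, ∑ k, (if i ≠ j ∧ j ≠ k ∧ i ≠ k then d j k else 0))
      + (∑ i, ∑ j, ∑ k, (if i ≠ j ∧ j ≠ k ∧ i ≠ k then d i k else 0)) := by
    rw [hS, ← Finset.sum_add_distrib, ← Finset.sum_add_distrib]
    apply Finset.sum_congr rfl; intro i _
    rw [← Finset.sum_add_distrib, ← Finset.sum_add_distrib]
    apply Finset.sum_congr rfl; intro j _
    rw [← Finset.sum_add_distrib, ← Finset.sum_add_distrib]
    apply Finset.sum_congr rfl; intro k _
    split <;> simp
  have hT1 : (∑ i, ∑ j, ∑ k, (if i ≠ j ∧ j ≠ k ∧ i ≠ k then d i j else 0))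
      = (r - 2) * Sord := by
    rw [hSord, Finset.mul_sum]
    apply Finset.sum_congr rfl; intro i _
    rw [Finset.mul_sum]
    apply Finset.sum_congr rfl; intro j _
    rw [inner3_k i j (d i j)]
    split <;> simp
  have hT2 : (∑ i, ∑ j, ∑ k, (if i ≠ j ∧ j ≠ k ∧ i ≠ k then d j k else 0))
      = (r - 2) * Sord := by
    rw [Finset.sum_comm]
    have : ∀ j : Fin r, (∑ i, ∑ k, (if i ≠ j ∧ j ≠ k ∧ i ≠ k then d j k else 0))
        = ∑ k, ∑ i, (if i ≠ j ∧ j ≠ k ∧ i ≠ k then d j k else 0) := fun j => Finset.sum_comm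
    rw [Finset.sum_congr rfl (fun j _ => this j)]
    rw [hSord, Finset.mul_sum]
    apply Finset.sum_congr rfl; intro j _
    rw [Finset.mul_sum]
    apply Finset.sum_congr rfl; intro k _
    rw [inner3_i j k (d j k)]
    split <;> simp
  have hT3 : (∑ i, ∑ j, ∑ k, (if i ≠ j ∧ j ≠ k ∧ i ≠ k then d i k else 0))
      = (r - 2) * Sord := by
    have : ∀ i : Fin r, (∑ j, ∑ k, (if i ≠ j ∧ j ≠ k ∧ i ≠ k then d i k else 0))
        = ∑ k, ∑ j, (if i ≠ j ∧ j ≠ k ∧ i ≠ k then d i k else 0) := fun i => Finset.sum_comm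
    rw [Finset.sum_congr rfl (fun i _ => this i)]
    rw [hSord, Finset.mul_sum]
    apply Finset.sum_congr rfl; intro i _
    rw [Finset.mul_sum]
    apply Finset.sum_congr rfl; intro k _
    rw [inner3_j i k (d i k)]
    split <;> simp
  have hlow : S = 3 * ((r - 2) * Sord) := by rw [hsplit, hT1, hT2, hT3]; ring
  -- cancel (r-2)
  have hSord_le : Sord ≤ 2 * (r * ((r - 1) * γ)) := by
    have h6 : 3 * ((r - 2) * Sord) ≤ 3 * ((r - 2) * (2 * (r * ((r-1) * γ)))) := by
      rw [← hlow]
      calc S ≤ r * ((r - 1) * ((r - 2) * (6 * γ))) := hub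
        _ = 3 * ((r - 2) * (2 * (r * ((r-1) * γ)))) := by ring
    have h7 := Nat.le_of_mul_le_mul_left h6 (by omega : 0 < 3)
    exact Nat.le_of_mul_le_mul_left h7 (by omega : 0 < r - 2)
  -- relate Sord to the sum over i < j
  have hprod : Sord = ∑ p ∈ (univ ×ˢ univ).filter (fun p : Fin r × Fin r => p.1 ≠ p.2),
      d p.1 p.2 := by
    rw [hSord, Finset.sum_filter, Finset.sum_product]
  have hsplit2 : (univ ×ˢ univ).filter (fun p : Fin r × Fin r => p.1 ≠ p.2)
      = (univ ×ˢ univ).filter (fun p : Fin r × Fin r => p.1 < p.2)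
        ∪ (univ ×ˢ univ).filter (fun p : Fin r × Fin r => p.2 < p.1) := by
    ext p
    simp only [Finset.mem_union, Finset.mem_filter, Finset.mem_product, Finset.mem_univ,
      true_and, and_true, ne_eq]
    exact ne_iff_lt_or_gt
  have hdisj : Disjoint
      ((univ ×ˢ univ).filter (fun p : Fin r × Fin r => p.1 < p.2))
      ((univ ×ˢ univ).filter (fun p : Fin r × Fin r => p.2 < p.1)) := by
    rw [Finset.disjoint_left]
    intro p hp hq
    simp only [Finset.mem_filter] at hp hq
    exact absurd hq.2 (not_lt.mpr hp.2.le)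
  rw [hsplit2, Finset.sum_union hdisj] at hprod
  have hswap : (∑ p ∈ (univ ×ˢ univ).filter (fun p : Fin r × Fin r => p.2 < p.1), d p.1 p.2)
      = ∑ p ∈ (univ ×ˢ univ).filter (fun p : Fin r × Fin r => p.1 < p.2), d p.1 p.2 := by
    apply Finset.sum_nbij' (i := fun p => Prod.swap p) (j := fun p => Prod.swap p)
    · intro a ha
      simp only [Finset.mem_filter, Finset.mem_product, Finset.mem_univ, true_and] at ha ⊢
      exact ha
    · intro a ha
      simp only [Finset.mem_filter, Finset.mem_product, Finset.mem_univ, true_and] at ha ⊢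
      exact ha
    · intro a _; simp
    · intro a _; simp
    · intro p _
      exact hdsymm p.1 p.2
  rw [hswap] at hprod
  -- conclude
  have h2S : 2 * (∑ p ∈ (univ ×ˢ univ).filter (fun p : Fin r × Fin r => p.1 < p.2), d p.1 p.2)
      = Sord := by rw [hprod]; ring
  have hfin : (∑ p ∈ (univ ×ˢ univ).filter (fun p : Fin r × Fin r => p.1 < p.2), d p.1 p.2)
      ≤ r * ((r - 1) * γ) := by
    apply Nat.le_of_mul_le_mul_left _ (show 0 < 2 by omega)
    rw [h2S]
    exact hSord_le
  calc (∑ p ∈ (univ ×ˢ univ).filter (fun p : Fin r × Fin r => p.1 < p.2),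
        G.dist (x p.1) (x p.2))
      = ∑ p ∈ (univ ×ˢ univ).filter (fun p : Fin r × Fin r => p.1 < p.2), d p.1 p.2 := rfl
    _ ≤ r * ((r - 1) * γ) := hfin
    _ = r * (r - 1) * domNum G := by rw [← hγ, mul_assoc]



variable {r : ℕ}

/-- `2 Σ_{i<j} d(i,j) = Σ_{i≠j} d(i,j)` for symmetric `d`. -/
lemma two_mul_sum_lt (d : Fin r → Fin r → ℕ) (hdsymm : ∀ i j, d i j = d j i) :
    2 * (∑ p ∈ (univ ×ˢ univ).filter (fun p : Fin r × Fin r => p.1 < p.2), d p.1 p.2)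
      = ∑ i, ∑ j, (if i ≠ j then d i j else 0) := by
  classical
  have hprod : (∑ i, ∑ j, (if i ≠ j then d i j else 0))
      = ∑ p ∈ (univ ×ˢ univ).filter (fun p : Fin r × Fin r => p.1 ≠ p.2), d p.1 p.2 := by
    rw [Finset.sum_filter, Finset.sum_product]
  have hsplit2 : (univ ×ˢ univ).filter (fun p : Fin r × Fin r => p.1 ≠ p.2)
      = (univ ×ˢ univ).filter (fun p : Fin r × Fin r => p.1 < p.2)
        ∪ (univ ×ˢ univ).filter (fun p : Fin r × Fin r => p.2 < p.1) := by
    ext p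
    simp only [Finset.mem_union, Finset.mem_filter, Finset.mem_product, Finset.mem_univ,
      true_and, and_true, ne_eq]
    exact ne_iff_lt_or_gt
  have hdisj : Disjoint
      ((univ ×ˢ univ).filter (fun p : Fin r × Fin r => p.1 < p.2))
      ((univ ×ˢ univ).filter (fun p : Fin r × Fin r => p.2 < p.1)) := by
    rw [Finset.disjoint_left]
    intro p hp hq
    simp only [Finset.mem_filter] at hp hq
    exact absurd hq.2 (not_lt.mpr hp.2.le)
  rw [hprod, hsplit2, Finset.sum_union hdisj]
  have hswap : (∑ p ∈ (univ ×ˢ univ).filter (fun p : Fin r × Fin r => p.2 < p.1), d p.1 p.2)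
      = ∑ p ∈ (univ ×ˢ univ).filter (fun p : Fin r × Fin r => p.1 < p.2), d p.1 p.2 := by
    apply Finset.sum_nbij' (i := fun p => Prod.swap p) (j := fun p => Prod.swap p)
    · intro a ha
      simp only [Finset.mem_filter, Finset.mem_product, Finset.mem_univ, true_and] at ha ⊢
      exact ha
    · intro a ha
      simp only [Finset.mem_filter, Finset.mem_product, Finset.mem_univ, true_and] at ha ⊢
      exact ha
    · intro a _; simp
    · intro a _; simp
    · intro p _; exact hdsymm p.1 p.2
  rw [hswap]
  ring

/-- The star graph on `Fin (r+1)` with center `0`. -/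
def starG (r : ℕ) : SimpleGraph (Fin (r + 1)) where
  Adj a b := a ≠ b ∧ (a = 0 ∨ b = 0)
  symm := by refine ⟨fun a b h => ?_⟩; exact ⟨h.1.symm, h.2.symm⟩
  loopless := by refine ⟨fun a h => ?_⟩; exact h.1 rfl

lemma starG_connected : (starG r).Connected := by
  have hpre : (starG r).Preconnected := by
    intro a b
    by_cases hab : a = b
    · exact hab ▸ Reachable.refl a
    · by_cases ha : a = 0
      · exact (show (starG r).Adj a b from ⟨hab, Or.inl ha⟩).reachable
      · by_cases hb : b = 0
        · exact (show (starG r).Adj a b from ⟨hab, Or.inr hb⟩).reachable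
        · exact ((show (starG r).Adj a 0 from ⟨ha, Or.inr rfl⟩).reachable).trans
            (show (starG r).Adj 0 b from ⟨fun h => hb h.symm, Or.inl rfl⟩).reachable
  exact ⟨hpre⟩

lemma starG_domNum : domNum (starG r) = 1 := by
  have h1 : (1 : ℕ) ∈ {n | ∃ S : Finset (Fin (r+1)), DomSet (starG r) S ∧ S.card = n} := by
    refine ⟨{0}, ?_, by simp⟩
    intro v
    by_cases hv : v = 0
    · exact Or.inl (by simp [hv])
    · exact Or.inr ⟨0, by simp, ⟨fun h => hv h.symm, Or.inl rfl⟩⟩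
  have hle : domNum (starG r) ≤ 1 := Nat.sInf_le h1
  have hne : domNum (starG r) ≠ 0 := by
    intro h0
    have hmem := Nat.sInf_mem (⟨1, h1⟩ :
      Set.Nonempty {n | ∃ S : Finset (Fin (r+1)), DomSet (starG r) S ∧ S.card = n})
    rw [show sInf {n | ∃ S : Finset (Fin (r+1)), DomSet (starG r) S ∧ S.card = n}
        = domNum (starG r) from rfl, h0] at hmem
    obtain ⟨S, hS, hcard⟩ := hmem
    rw [Finset.card_eq_zero] at hcard
    subst hcard
    rcases hS 0 with h | ⟨u, hu, _⟩
    · simp at h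
    · simp at hu
  omega

lemma starG_dist_leaves {i j : Fin r} (hij : i ≠ j) :
    (starG r).dist i.succ j.succ = 2 := by
  have hne : (i.succ : Fin (r+1)) ≠ j.succ := by
    simp [Fin.succ_inj, hij]
  have hi0 : (i.succ : Fin (r+1)) ≠ 0 := Fin.succ_ne_zero i
  have hj0 : (j.succ : Fin (r+1)) ≠ 0 := Fin.succ_ne_zero j
  have hnadj : ¬ (starG r).Adj i.succ j.succ := by
    rintro ⟨-, h | h⟩
    · exact hi0 h
    · exact hj0 h
  have hw : (starG r).dist i.succ j.succ ≤ 2 := by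
    have := SimpleGraph.dist_le
      (Walk.cons (show (starG r).Adj i.succ 0 from ⟨hi0, Or.inr rfl⟩)
        (Walk.cons (show (starG r).Adj 0 j.succ from ⟨(Fin.succ_ne_zero j).symm, Or.inl rfl⟩)
          Walk.nil))
    simpa using this
  have hpos : (starG r).dist i.succ j.succ ≠ 0 := fun h0 =>
    hne (starG_connected.dist_eq_zero_iff.mp h0)
  have hone : (starG r).dist i.succ j.succ ≠ 1 := fun h1 =>
    hnadj (SimpleGraph.dist_eq_one_iff_adj.mp h1)
  omega


end CrProof

theorem largest_constant_Cr (r : ℕ) (hr : 3 ≤ r) :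
    IsGreatest {C : ℝ |
      ∀ (V : Type) (_ : Fintype V) (G : SimpleGraph V), G.Connected →
        ∀ x : Fin r → V,
          C * (∑ p ∈ (univ ×ˢ univ).filter (fun p : Fin r × Fin r => p.1 < p.2),
                (G.dist (x p.1) (x p.2) : ℝ)) ≤ (domNum G : ℝ)}
      (1 / (r * (r - 1))) := by
  have hrpos : (0 : ℝ) < (r : ℝ) * ((r : ℝ) - 1) := by
    have : (3 : ℝ) ≤ (r : ℝ) := by exact_mod_cast hr
    nlinarith
  constructor
  · -- membership
    intro V instV G hc x
    letI := instV
    have hnat := CrProof.nat_bound G hc hr x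
    have hreal : (∑ p ∈ (univ ×ˢ univ).filter (fun p : Fin r × Fin r => p.1 < p.2),
          ((G.dist (x p.1) (x p.2) : ℕ) : ℝ))
        ≤ (r : ℝ) * ((r : ℝ) - 1) * (domNum G : ℝ) := by
      calc (∑ p ∈ (univ ×ˢ univ).filter (fun p : Fin r × Fin r => p.1 < p.2),
            ((G.dist (x p.1) (x p.2) : ℕ) : ℝ))
          = ((∑ p ∈ (univ ×ˢ univ).filter (fun p : Fin r × Fin r => p.1 < p.2),
              G.dist (x p.1) (x p.2) : ℕ) : ℝ) := by push_cast; ring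
        _ ≤ ((r * (r - 1) * domNum G : ℕ) : ℝ) := by exact_mod_cast hnat
        _ = (r : ℝ) * ((r : ℝ) - 1) * (domNum G : ℝ) := by
            push_cast [Nat.cast_sub (by omega : 1 ≤ r)]
            ring
    rw [div_mul_eq_mul_div, one_mul, div_le_iff₀ hrpos]
    calc (∑ p ∈ (univ ×ˢ univ).filter (fun p : Fin r × Fin r => p.1 < p.2),
          ((G.dist (x p.1) (x p.2) : ℕ) : ℝ))
        ≤ (r : ℝ) * ((r : ℝ) - 1) * (domNum G : ℝ) := hreal
      _ = (domNum G : ℝ) * ((r : ℝ) * ((r : ℝ) - 1)) := by ring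
  · -- upper bound via the star
    intro C hC
    have h := hC (Fin (r + 1)) inferInstance (CrProof.starG r) CrProof.starG_connected (fun i => i.succ)
    rw [CrProof.starG_domNum] at h
    -- compute the sum
    have hsum : (∑ p ∈ (univ ×ˢ univ).filter (fun p : Fin r × Fin r => p.1 < p.2),
          (((CrProof.starG r).dist (Fin.succ p.1) (Fin.succ p.2) : ℕ) : ℝ))
        = (r : ℝ) * ((r : ℝ) - 1) := by
      have hnat2 : (∑ p ∈ (univ ×ˢ univ).filter (fun p : Fin r × Fin r => p.1 < p.2),
            (CrProof.starG r).dist (Fin.succ p.1) (Fin.succ p.2))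
          = ∑ p ∈ (univ ×ˢ univ).filter (fun p : Fin r × Fin r => p.1 < p.2), 2 := by
        apply Finset.sum_congr rfl
        intro p hp
        simp only [Finset.mem_filter] at hp
        exact CrProof.starG_dist_leaves (ne_of_lt hp.2)
      have h2 : 2 * (∑ p ∈ (univ ×ˢ univ).filter (fun p : Fin r × Fin r => p.1 < p.2),
            (fun _ _ => 2 : Fin r → Fin r → ℕ) p.1 p.2) = ∑ i : Fin r, ∑ j : Fin r,
            (if i ≠ j then 2 else 0) :=
        CrProof.two_mul_sum_lt (fun _ _ => 2) (fun _ _ => rfl)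
      have h3 : (∑ i : Fin r, ∑ j : Fin r, (if i ≠ j then (2:ℕ) else 0)) = r * ((r-1) * 2) := by
        have : ∀ i : Fin r, (∑ j : Fin r, (if i ≠ j then (2:ℕ) else 0)) = (r - 1) * 2 := by
          intro i
          have : ∀ j : Fin r, (if i ≠ j then (2:ℕ) else 0) = (if j ≠ i then 2 else 0) := by
            intro j; exact if_congr ne_comm rfl rfl
          rw [Finset.sum_congr rfl (fun j _ => this j), CrProof.sum_ite_ne i 2]
        rw [Finset.sum_congr rfl (fun i _ => this i), Finset.sum_const, Finset.card_univ,
          Fintype.card_fin, smul_eq_mul]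
      have h4 : r * ((r - 1) * 2) = (r * (r - 1)) * 2 := by ring
      have hnatval : (∑ p ∈ (univ ×ˢ univ).filter (fun p : Fin r × Fin r => p.1 < p.2),
            (CrProof.starG r).dist (Fin.succ p.1) (Fin.succ p.2)) = r * (r - 1) := by
        simp only at h2
        omega
      calc (∑ p ∈ (univ ×ˢ univ).filter (fun p : Fin r × Fin r => p.1 < p.2),
            (((CrProof.starG r).dist (Fin.succ p.1) (Fin.succ p.2) : ℕ) : ℝ))
          = ((∑ p ∈ (univ ×ˢ univ).filter (fun p : Fin r × Fin r => p.1 < p.2),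
              (CrProof.starG r).dist (Fin.succ p.1) (Fin.succ p.2) : ℕ) : ℝ) := by push_cast; ring
        _ = ((r * (r - 1) : ℕ) : ℝ) := by rw [hnatval]
        _ = (r : ℝ) * ((r : ℝ) - 1) := by
            push_cast [Nat.cast_sub (by omega : 1 ≤ r)]
            ring
    rw [hsum] at h
    rw [le_div_iff₀ hrpos]
    simpa using h
end
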